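/- arXiv:1811.01351 — 6 statements merged into one kernel-verified Lean document; each statement's English description precedes it below -/
import Mathlib

section
/- Fix positive integers n, d, w, an indexed set Q = {q₁,…,q_ℓ, p₁,…,p_m} of polynomials on n pairs of twin variables, and a cut-off function c for Q. Let i ∈ [n], let Q₀ and Q₁ be the extensions of Q with the additional equality constraint p_{m+1} = x_i and p_{m+1} = x̄_i respectively, and let c' be the extension of c mapping the new index m+1 to 1. Then c' is a cut-off function for both Q₀ and Q₁, and: (i) if Q[i/0] ⊢^c_{w,2d} −1 ≥ 0, then Q₀ ⊢^{c'}_{w,2d} −1 ≥ 0; (ii) if Q[i/1] ⊢^c_{w,2d} −1 ≥ 0, then Q₁ ⊢^{c'}_{w,2d} −1 ≥ 0. -/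
open MvPolynomial

noncomputable section

/-- The polynomial ring in `n` pairs of twin variables: `Sum.inl i` is the basic
variable `xᵢ` and `Sum.inr i` is its twin `x̄ᵢ`. -/
abbrev MvPoly (n : ℕ) : Type := MvPolynomial (Fin n ⊕ Fin n) ℝ

/-- The Boolean axioms `xᵢ² − xᵢ`, `x̄ᵢ² − x̄ᵢ` and `xᵢ + x̄ᵢ − 1`. -/
def boolAxiom (n : ℕ) (a : Fin 3 × Fin n) : MvPoly n :=
  if a.1 = 0 then X (Sum.inl a.2) ^ 2 - X (Sum.inl a.2)
  else if a.1 = 1 then X (Sum.inr a.2) ^ 2 - X (Sum.inr a.2)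
  else X (Sum.inl a.2) + X (Sum.inr a.2) - 1

/-- The sum of squares of a list of polynomials. -/
def sosOf {n : ℕ} (l : List (MvPoly n)) : MvPoly n := (l.map (· ^ 2)).sum

/-- A Positivstellensatz proof of `goal ≥ 0` from the inequality constraints
`q j ≥ 0` (`j : Fin ℓ`) and the equality constraints `p j = 0` (`j : Fin m`),
on `n` pairs of twin variables. -/
structure PSProof (n ℓ m : ℕ) (q : Fin ℓ → MvPoly n) (p : Fin m → MvPoly n)
    (goal : MvPoly n) : Type where
  Js : Finset (Finset (Fin ℓ))
  empty_not_mem : ∅ ∉ Js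
  r0 : List (MvPoly n)
  r : Finset (Fin ℓ) → List (MvPoly n)
  t : Fin m → MvPoly n
  u : Fin 3 × Fin n → MvPoly n
  identity : goal = sosOf r0 + ∑ J ∈ Js, sosOf (r J) * ∏ j ∈ J, q j
      + ∑ j, t j * p j + ∑ a, u a * boolAxiom n a

namespace PSProof

variable {n ℓ m : ℕ} {q : Fin ℓ → MvPoly n} {p : Fin m → MvPoly n} {goal : MvPoly n}

/-- The proof has product-width at most `w`. -/
def widthLE (π : PSProof n ℓ m q p goal) (w : ℕ) : Prop := ∀ J ∈ π.Js, J.card ≤ w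

/-- The proof has degree at most `d` (the zero polynomial having degree `−∞`). -/
def degreeLE (π : PSProof n ℓ m q p goal) (d : ℕ) : Prop :=
  goal.totalDegree ≤ d ∧ (sosOf π.r0).totalDegree ≤ d ∧
  (∀ J ∈ π.Js, sosOf (π.r J) ≠ 0 →
    (sosOf (π.r J)).totalDegree + ∑ j ∈ J, (q j).totalDegree ≤ d) ∧
  (∀ j, π.t j ≠ 0 → (π.t j).totalDegree + (p j).totalDegree ≤ d)

/-- The monomial size of the proof: the total number of monomials of the `r` and `t`
polynomials. -/
def size (π : PSProof n ℓ m q p goal) : ℕ :=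
  (π.r0.map fun r => r.support.card).sum
  + ∑ J ∈ π.Js, ((π.r J).map fun r => r.support.card).sum
  + ∑ j, (π.t j).support.card

end PSProof

/-- A cut-off function for the system `q, p`. -/
def IsCutoff {n ℓ m : ℕ} (q : Fin ℓ → MvPoly n) (p : Fin m → MvPoly n)
    (c : Finset (Fin ℓ) ⊕ Fin m → ℕ) : Prop :=
  (∀ J : Finset (Fin ℓ), ∑ j ∈ J, (q j).totalDegree ≤ c (Sum.inl J)) ∧
  (∀ j : Fin m, (p j).totalDegree ≤ c (Sum.inr j))

/-- The proof has degree mod `c` at most `d`. -/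
def PSProof.degreeModLE {n ℓ m : ℕ} {q : Fin ℓ → MvPoly n} {p : Fin m → MvPoly n}
    {goal : MvPoly n} (π : PSProof n ℓ m q p goal)
    (c : Finset (Fin ℓ) ⊕ Fin m → ℕ) (d : ℕ) : Prop :=
  goal.totalDegree ≤ d ∧ (sosOf π.r0).totalDegree ≤ d ∧
  (∀ J ∈ π.Js, sosOf (π.r J) ≠ 0 → (sosOf (π.r J)).totalDegree + c (Sum.inl J) ≤ d) ∧
  (∀ j, π.t j ≠ 0 → (π.t j).totalDegree + c (Sum.inr j) ≤ d)

/-- `PS^c_{w,d}(Q)`: polynomials of degree at most `d` with a PS proof of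
degree mod `c` at most `d` and product-width at most `w`.  `Q ⊢^c_{w,d} a ≥ b`
is expressed as `a - b ∈ PScone …`. -/
def PScone (n ℓ m : ℕ) (q : Fin ℓ → MvPoly n) (p : Fin m → MvPoly n)
    (c : Finset (Fin ℓ) ⊕ Fin m → ℕ) (w d : ℕ) : Set (MvPoly n) :=
  {g | g.totalDegree ≤ d ∧ ∃ π : PSProof n ℓ m q p g, π.degreeModLE c d ∧ π.widthLE w}

/-- `ℰ^c_{w,d}(Q)`: pseudo-expectations, i.e. linear functionals on the space of
polynomials of degree at most `d` sending `1` to `1` and the cone to nonnegatives. -/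
def PseudoExp (n ℓ m : ℕ) (q : Fin ℓ → MvPoly n) (p : Fin m → MvPoly n)
    (c : Finset (Fin ℓ) ⊕ Fin m → ℕ) (w d : ℕ) :
    Set ((restrictTotalDegree (Fin n ⊕ Fin n) ℝ d) →ₗ[ℝ] ℝ) :=
  {E | (∀ g : restrictTotalDegree (Fin n ⊕ Fin n) ℝ d, (g : MvPoly n) = 1 → E g = 1) ∧
    (∀ g : restrictTotalDegree (Fin n ⊕ Fin n) ℝ d,
      (g : MvPoly n) ∈ PScone n ℓ m q p c w d → 0 ≤ E g)}

/-- The substitution `xᵢ := b`, `x̄ᵢ := 1 − b` (all other variables unchanged). -/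
def substVar (n : ℕ) (i : Fin n) (b : ℝ) : MvPoly n →ₐ[ℝ] MvPoly n :=
  aeval fun v => match v with
    | Sum.inl j => if j = i then C b else X (Sum.inl j)
    | Sum.inr j => if j = i then C (1 - b) else X (Sum.inr j)

lemma monomial_split {σ : Type*} [DecidableEq σ] (v : σ) (s : σ →₀ ℕ) (a : ℝ) :
    monomial s a = monomial (s.erase v) a * X v ^ (s v) := by
  rw [X_pow_eq_monomial, monomial_mul, mul_one, Finsupp.erase_add_single]

lemma aeval_fix_monomial {σ : Type*} [DecidableEq σ] (v : σ) (r : ℝ) (s : σ →₀ ℕ) (a : ℝ) :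
    aeval (fun u => if u = v then C r else X u) (monomial s a)
      = monomial (s.erase v) a * C r ^ (s v) := by
  rw [monomial_split v s a, map_mul, map_pow, aeval_X, if_pos rfl]
  congr 1
  rw [aeval_monomial]
  rw [show (algebraMap ℝ (MvPolynomial σ ℝ)) a = C a from rfl]
  rw [monomial_eq]
  congr 1
  apply Finsupp.prod_congr
  intro u hu
  have : u ≠ v := by
    intro h; subst h
    simp [Finsupp.support_erase] at hu
  simp [this]

lemma erase_sum_lemma {σ : Type*} [DecidableEq σ] (v : σ) (s : σ →₀ ℕ) :
    ((s.erase v).sum fun _ e => e) + s v = s.sum fun _ e => e := by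
  conv_rhs => rw [← Finsupp.erase_add_single v s]
  rw [Finsupp.sum_add_index (by simp) (by simp)]
  simp [Finsupp.sum_single_index]

lemma subst_single {σ : Type*} [DecidableEq σ] (v : σ) (r : ℝ) (g : MvPolynomial σ ℝ) :
    ∃ A : MvPolynomial σ ℝ,
      g = aeval (fun u => if u = v then C r else X u) g + A * (X v - C r) ∧
      (A = 0 ∨ A.totalDegree + 1 ≤ g.totalDegree) := by
  classical
  set f : σ → MvPolynomial σ ℝ := fun u => if u = v then C r else X u with hf
  set Am : (σ →₀ ℕ) → MvPolynomial σ ℝ := fun s =>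
    monomial (s.erase v) (g.coeff s) *
      ∑ j ∈ Finset.range (s v), X v ^ j * C r ^ (s v - 1 - j) with hAm
  refine ⟨∑ s ∈ g.support, Am s, ?_, ?_⟩
  · have key : ∀ s ∈ g.support,
        monomial s (g.coeff s) = aeval f (monomial s (g.coeff s)) + Am s * (X v - C r) := by
      intro s _
      rw [aeval_fix_monomial, hAm]
      have := geom_sum₂_mul (X v : MvPolynomial σ ℝ) (C r) (s v)
      calc monomial s (g.coeff s) = monomial (s.erase v) (g.coeff s) * X v ^ (s v) :=
            monomial_split v s _
        _ = monomial (s.erase v) (g.coeff s) * C r ^ (s v)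
              + monomial (s.erase v) (g.coeff s)
                * ((∑ j ∈ Finset.range (s v), X v ^ j * C r ^ (s v - 1 - j)) * (X v - C r)) := by
            rw [this]; ring
        _ = _ := by ring
    conv_lhs => rw [← support_sum_monomial_coeff g]
    rw [Finset.sum_congr rfl key, Finset.sum_add_distrib, ← Finset.sum_mul, ← map_sum,
      support_sum_monomial_coeff g]
  · by_cases hall : ∀ s ∈ g.support, s v = 0
    · left
      apply Finset.sum_eq_zero
      intro s hs
      simp [hAm, hall s hs]
    · right
      push_neg at hall
      obtain ⟨s₀, hs₀, hs₀v⟩ := hall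
      have hg1 : 1 ≤ g.totalDegree := by
        have := le_totalDegree hs₀
        have h1 : 1 ≤ s₀.sum fun _ e => e := by
          rw [← erase_sum_lemma v s₀]; omega
        omega
      have hbd : ∀ s ∈ g.support, (Am s).totalDegree + 1 ≤ g.totalDegree := by
        intro s hs
        by_cases hv : s v = 0
        · simp [hAm, hv]; omega
        · have h1 : (Am s).totalDegree ≤ ((s.erase v).sum fun _ e => e) + (s v - 1) := by
            refine le_trans (totalDegree_mul _ _) ?_
            gcongr
            · exact totalDegree_monomial_le _ _
            · refine le_trans (totalDegree_finset_sum _ _) ?_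
              apply Finset.sup_le
              intro j hj
              refine le_trans (totalDegree_mul _ _) ?_
              simp only [totalDegree_X_pow]
              have : (C (r ^ (s v - 1 - j)) : MvPolynomial σ ℝ).totalDegree = 0 :=
                totalDegree_C _
              rw [← C_pow, this]
              simp at hj; omega
          have h2 := le_totalDegree hs
          have h3 := erase_sum_lemma v s
          omega
      have : (∑ s ∈ g.support, Am s).totalDegree ≤ g.totalDegree - 1 :=
        le_trans (totalDegree_finset_sum _ _)
          (Finset.sup_le fun s hs => by have := hbd s hs; omega)
      omega

lemma aeval_fix_totalDegree_le {σ : Type*} [DecidableEq σ] (v : σ) (r : ℝ)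
    (g : MvPolynomial σ ℝ) :
    (aeval (fun u => if u = v then C r else X u) g).totalDegree ≤ g.totalDegree := by
  conv_lhs => rw [← support_sum_monomial_coeff g]
  rw [map_sum]
  refine le_trans (totalDegree_finset_sum _ _) (Finset.sup_le fun s hs => ?_)
  rw [aeval_fix_monomial]
  refine le_trans (totalDegree_mul _ _) ?_
  have h1 : ((monomial (s.erase v) (g.coeff s)) : MvPolynomial σ ℝ).totalDegree
      ≤ (s.erase v).sum fun _ e => e := totalDegree_monomial_le _ _
  have h2 : ((C r : MvPolynomial σ ℝ) ^ (s v)).totalDegree = 0 := by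
    rw [← C_pow]; exact totalDegree_C _
  have h3 := erase_sum_lemma v s
  have h4 := le_totalDegree hs
  omega

lemma substVar_comp (n : ℕ) (i : Fin n) (b : ℝ) (g : MvPoly n) :
    substVar n i b g
      = aeval (fun u => if u = Sum.inr i then C (1 - b) else X u)
          (aeval (fun u => if u = Sum.inl i then C b else X u) g) := by
  have : (aeval (fun u => if u = Sum.inr i then C (1 - b) else X u) :
        MvPoly n →ₐ[ℝ] MvPoly n).comp
      (aeval (fun u => if u = Sum.inl i then C b else X u)) = substVar n i b := by
    apply MvPolynomial.algHom_ext
    intro u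
    rcases u with j | j
    · by_cases h : j = i <;> simp [substVar, h]
    · by_cases h : j = i <;> simp [substVar, h]
  rw [← this]; rfl

lemma substVar_core (n : ℕ) (i : Fin n) (b : ℝ) (g : MvPoly n) :
    ∃ A1 A2 : MvPoly n,
      g = substVar n i b g + A1 * (X (Sum.inl i) - C b) + A2 * (X (Sum.inr i) - C (1 - b)) ∧
      (A1 = 0 ∨ A1.totalDegree + 1 ≤ g.totalDegree) ∧
      (A2 = 0 ∨ A2.totalDegree + 1 ≤ g.totalDegree) := by
  obtain ⟨A1, h1, hd1⟩ := subst_single (Sum.inl i) b g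
  obtain ⟨A2, h2, hd2⟩ :=
    subst_single (Sum.inr i) (1 - b) (aeval (fun u => if u = Sum.inl i then C b else X u) g)
  refine ⟨A1, A2, ?_, hd1, ?_⟩
  · rw [substVar_comp]
    conv_lhs => rw [h1, h2]
    ring
  · rcases hd2 with h | h
    · exact Or.inl h
    · exact Or.inr (le_trans h (aeval_fix_totalDegree_le _ _ _))

lemma boolAxiom_two (n : ℕ) (i : Fin n) :
    boolAxiom n (2, i) = X (Sum.inl i) + X (Sum.inr i) - 1 := by
  simp [boolAxiom]

lemma diff_deg {σ : Type*} (D : ℕ) (A1 A2 : MvPolynomial σ ℝ)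
    (h1 : A1 = 0 ∨ A1.totalDegree + 1 ≤ D) (h2 : A2 = 0 ∨ A2.totalDegree + 1 ≤ D) :
    A1 - A2 = 0 ∨ (A1 - A2).totalDegree + 1 ≤ D := by
  by_cases h : A1 - A2 = 0
  · exact Or.inl h
  · right
    have hm := totalDegree_sub A1 A2
    have key : A1.totalDegree + 1 ≤ D ∧ A2.totalDegree + 1 ≤ D := by
      rcases h1 with rfl | h1 <;> rcases h2 with rfl | h2
      · simp at h
      · simpa using And.intro (by omega : (0:ℕ) + 1 ≤ D) h2
      · exact ⟨h1, by simpa using (by omega : (0:ℕ) + 1 ≤ D)⟩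
      · exact ⟨h1, h2⟩
    rcases key with ⟨k1, k2⟩
    rcases Nat.le_total A1.totalDegree A2.totalDegree with h' | h'
    · rw [max_eq_right h'] at hm; omega
    · rw [max_eq_left h'] at hm; omega

lemma substVar_decomp0 (n : ℕ) (i : Fin n) (g : MvPoly n) :
    ∃ A B : MvPoly n,
      substVar n i 0 g = g - A * X (Sum.inl i) - B * boolAxiom n (2, i) ∧
      (A = 0 ∨ A.totalDegree + 1 ≤ g.totalDegree) := by
  obtain ⟨A1, A2, hId, hd1, hd2⟩ := substVar_core n i 0 g
  rw [boolAxiom_two]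
  refine ⟨A1 - A2, A2, ?_, diff_deg _ _ _ hd1 hd2⟩
  norm_num at hId
  linear_combination -hId

lemma substVar_decomp1 (n : ℕ) (i : Fin n) (g : MvPoly n) :
    ∃ A B : MvPoly n,
      substVar n i 1 g = g - A * X (Sum.inr i) - B * boolAxiom n (2, i) ∧
      (A = 0 ∨ A.totalDegree + 1 ≤ g.totalDegree) := by
  obtain ⟨A1, A2, hId, hd1, hd2⟩ := substVar_core n i 1 g
  rw [boolAxiom_two]
  refine ⟨A2 - A1, A1, ?_, diff_deg _ _ _ hd2 hd1⟩
  norm_num at hId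
  linear_combination -hId

lemma lift_refutation (n d w ℓ m : ℕ) (hd : 0 < d)
    (q : Fin ℓ → MvPoly n) (p : Fin m → MvPoly n)
    (c : Finset (Fin ℓ) ⊕ Fin m → ℕ) (hc : IsCutoff q p c) (i : Fin n)
    (bvar : MvPoly n) (pb : Fin (m + 1) → MvPoly n) (hpb : pb = Fin.snoc p bvar)
    (sv : MvPoly n →ₐ[ℝ] MvPoly n)
    (hdec : ∀ g : MvPoly n, ∃ A B : MvPoly n,
      sv g = g - A * bvar - B * boolAxiom n (2, i) ∧
      (A = 0 ∨ A.totalDegree + 1 ≤ g.totalDegree))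
    (c' : Finset (Fin ℓ) ⊕ Fin (m + 1) → ℕ)
    (hc'l : ∀ J, c' (Sum.inl J) = c (Sum.inl J))
    (hc'r : ∀ j : Fin m, c' (Sum.inr j.castSucc) = c (Sum.inr j))
    (hc'new : c' (Sum.inr (Fin.last m)) = 1)
    (h : (-1 : MvPoly n) ∈ PScone n ℓ m (fun j => sv (q j)) (fun j => sv (p j)) c w (2 * d)) :
    (-1 : MvPoly n) ∈ PScone n ℓ (m + 1) q pb c' w (2 * d) := by
  obtain ⟨hdeg1, π, hmod, hwidth⟩ := h
  choose A B hAB hAdeg using hdec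
  refine ⟨hdeg1, ⟨π.Js, π.empty_not_mem, π.r0, π.r,
    Fin.snoc π.t (-(∑ J ∈ π.Js, sosOf (π.r J) * A (∏ j ∈ J, q j) + ∑ j, π.t j * A (p j))),
    fun a => π.u a - (if a = (2, i)
      then (∑ J ∈ π.Js, sosOf (π.r J) * B (∏ j ∈ J, q j) + ∑ j, π.t j * B (p j)) else 0),
    ?_⟩, ?_, ?_⟩
  · -- the identity
    have hid := π.identity
    have e1 : ∑ J ∈ π.Js, sosOf (π.r J) * ∏ j ∈ J, sv (q j)
        = (∑ J ∈ π.Js, sosOf (π.r J) * ∏ j ∈ J, q j)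
          - (∑ J ∈ π.Js, sosOf (π.r J) * A (∏ j ∈ J, q j)) * bvar
          - (∑ J ∈ π.Js, sosOf (π.r J) * B (∏ j ∈ J, q j)) * boolAxiom n (2, i) := by
      rw [Finset.sum_mul, Finset.sum_mul, ← Finset.sum_sub_distrib, ← Finset.sum_sub_distrib]
      refine Finset.sum_congr rfl fun J _ => ?_
      rw [show (∏ j ∈ J, sv (q j)) = sv (∏ j ∈ J, q j) from (map_prod sv q J).symm,
        hAB (∏ j ∈ J, q j)]
      ring
    have e2 : ∑ j, π.t j * sv (p j)
        = (∑ j, π.t j * p j) - (∑ j, π.t j * A (p j)) * bvar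
          - (∑ j, π.t j * B (p j)) * boolAxiom n (2, i) := by
      rw [Finset.sum_mul, Finset.sum_mul, ← Finset.sum_sub_distrib, ← Finset.sum_sub_distrib]
      refine Finset.sum_congr rfl fun j _ => ?_
      rw [hAB (p j)]
      ring
    rw [e1, e2] at hid
    have e3 : ∑ j : Fin (m + 1),
        (Fin.snoc π.t
          (-(∑ J ∈ π.Js, sosOf (π.r J) * A (∏ j ∈ J, q j) + ∑ j, π.t j * A (p j))) :
          Fin (m + 1) → MvPoly n) j * pb j
        = (∑ j : Fin m, π.t j * p j)
          + (-(∑ J ∈ π.Js, sosOf (π.r J) * A (∏ j ∈ J, q j) + ∑ j, π.t j * A (p j))) * bvar := by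
      rw [Fin.sum_univ_castSucc]
      simp [hpb, Fin.snoc_castSucc, Fin.snoc_last]
    have e4 : ∑ a, (π.u a - (if a = (2, i)
          then (∑ J ∈ π.Js, sosOf (π.r J) * B (∏ j ∈ J, q j) + ∑ j, π.t j * B (p j)) else 0))
            * boolAxiom n a
        = (∑ a, π.u a * boolAxiom n a)
          - (∑ J ∈ π.Js, sosOf (π.r J) * B (∏ j ∈ J, q j) + ∑ j, π.t j * B (p j))
            * boolAxiom n (2, i) := by
      simp only [sub_mul, ite_mul, zero_mul, Finset.sum_sub_distrib]
      congr 1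
      rw [Finset.sum_ite_eq' Finset.univ (2, i)
        (fun a => (∑ J ∈ π.Js, sosOf (π.r J) * B (∏ j ∈ J, q j) + ∑ j, π.t j * B (p j))
          * boolAxiom n a)]
      simp
    rw [e3, e4]
    linear_combination hid
  · -- degree mod c'
    refine ⟨hdeg1, hmod.2.1, fun J hJ hne => ?_, fun j hne => ?_⟩
    · rw [hc'l]; exact hmod.2.2.1 J hJ hne
    · induction j using Fin.lastCases with
      | last =>
        rw [hc'new]
        simp only [Fin.snoc_last]
        have hb1 : ∀ J ∈ π.Js, (sosOf (π.r J) * A (∏ j ∈ J, q j)).totalDegree + 1 ≤ 2 * d := by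
          intro J hJ
          by_cases h0 : sosOf (π.r J) = 0
          · simp only [h0, zero_mul, totalDegree_zero]; omega
          rcases hAdeg (∏ j ∈ J, q j) with hA | hA
          · simp only [hA, mul_zero, totalDegree_zero]; omega
          have hdd := hmod.2.2.1 J hJ h0
          have hq : (∏ j ∈ J, q j).totalDegree ≤ c (Sum.inl J) :=
            le_trans (totalDegree_finset_prod J q) (hc.1 J)
          have := totalDegree_mul (sosOf (π.r J)) (A (∏ j ∈ J, q j))
          omega
        have hb2 : ∀ j : Fin m, (π.t j * A (p j)).totalDegree + 1 ≤ 2 * d := by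
          intro j
          by_cases h0 : π.t j = 0
          · simp only [h0, zero_mul, totalDegree_zero]; omega
          rcases hAdeg (p j) with hA | hA
          · simp only [hA, mul_zero, totalDegree_zero]; omega
          have hdd := hmod.2.2.2 j h0
          have hq : (p j).totalDegree ≤ c (Sum.inr j) := hc.2 j
          have := totalDegree_mul (π.t j) (A (p j))
          omega
        have hsum : (-(∑ J ∈ π.Js, sosOf (π.r J) * A (∏ j ∈ J, q j)
            + ∑ j, π.t j * A (p j))).totalDegree ≤ 2 * d - 1 := by
          rw [totalDegree_neg]
          refine le_trans (totalDegree_add _ _) (max_le ?_ ?_) <;>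
            refine le_trans (totalDegree_finset_sum _ _) (Finset.sup_le fun x hx => ?_)
          · have := hb1 x hx; omega
          · have := hb2 x; omega
        omega
      | cast j =>
        rw [hc'r]
        simp only [Fin.snoc_castSucc] at hne ⊢
        exact hmod.2.2.2 j hne
  · exact hwidth

/-- **Lemma 5 (unrestricting).** Let `Q₀` and `Q₁` extend `Q` with the equality
constraints `xᵢ = 0` resp. `x̄ᵢ = 0`, and let `c'` extend `c` by `c'(m+1) = 1`.
Then `c'` is a cut-off function for `Q₀` and `Q₁`, and a degree-`2d` mod-`c`
refutation of `Q[i/0]` (resp. `Q[i/1]`) gives a degree-`2d` mod-`c'` refutation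
of `Q₀` (resp. `Q₁`), of the same product-width. -/
theorem statement5 (n d w : ℕ) (hn : 0 < n) (hd : 0 < d) (hw : 0 < w) (ℓ m : ℕ)
    (q : Fin ℓ → MvPoly n) (p : Fin m → MvPoly n)
    (c : Finset (Fin ℓ) ⊕ Fin m → ℕ) (hc : IsCutoff q p c) (i : Fin n)
    (p0 p1 : Fin (m + 1) → MvPoly n)
    (hp0 : p0 = Fin.snoc p (X (Sum.inl i))) (hp1 : p1 = Fin.snoc p (X (Sum.inr i)))
    (c' : Finset (Fin ℓ) ⊕ Fin (m + 1) → ℕ)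
    (hc'l : ∀ J : Finset (Fin ℓ), c' (Sum.inl J) = c (Sum.inl J))
    (hc'r : ∀ j : Fin m, c' (Sum.inr j.castSucc) = c (Sum.inr j))
    (hc'new : c' (Sum.inr (Fin.last m)) = 1) :
    IsCutoff q p0 c' ∧ IsCutoff q p1 c' ∧
    (((-1 : MvPoly n) ∈ PScone n ℓ m (fun j => substVar n i 0 (q j))
        (fun j => substVar n i 0 (p j)) c w (2 * d)) →
      (-1 : MvPoly n) ∈ PScone n ℓ (m + 1) q p0 c' w (2 * d)) ∧
    (((-1 : MvPoly n) ∈ PScone n ℓ m (fun j => substVar n i 1 (q j))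
        (fun j => substVar n i 1 (p j)) c w (2 * d)) →
      (-1 : MvPoly n) ∈ PScone n ℓ (m + 1) q p1 c' w (2 * d)) := by
  have cut0 : IsCutoff q p0 c' := by
    refine ⟨fun J => by rw [hc'l]; exact hc.1 J, fun j => ?_⟩
    induction j using Fin.lastCases with
    | last => rw [hc'new, hp0]; simp [Fin.snoc_last, totalDegree_X]
    | cast j => rw [hc'r, hp0]; simpa [Fin.snoc_castSucc] using hc.2 j
  have cut1 : IsCutoff q p1 c' := by
    refine ⟨fun J => by rw [hc'l]; exact hc.1 J, fun j => ?_⟩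
    induction j using Fin.lastCases with
    | last => rw [hc'new, hp1]; simp [Fin.snoc_last, totalDegree_X]
    | cast j => rw [hc'r, hp1]; simpa [Fin.snoc_castSucc] using hc.2 j
  refine ⟨cut0, cut1, fun h => ?_, fun h => ?_⟩
  · exact lift_refutation n d w ℓ m hd q p c hc i (X (Sum.inl i)) p0 hp0
      (substVar n i 0) (substVar_decomp0 n i) c' hc'l hc'r hc'new h
  · exact lift_refutation n d w ℓ m hd q p c hc i (X (Sum.inr i)) p1 hp1
      (substVar n i 1) (substVar_decomp1 n i) c' hc'l hc'r hc'new h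
end
end

section
/- Fix positive integers n, d, w, an indexed set Q = {q₁,…,q_ℓ, p₁,…,p_m} of polynomials on n pairs of twin variables, and a cut-off function c for Q. Let i ∈ [n], let Q₀ and Q₁ be the extensions of Q with the additional equality constraint p_{m+1} = x_i and p_{m+1} = x̄_i respectively, and let c' be the extension of c mapping the new index m+1 to 1. Then: (i) if Q₀ ⊢^{c'}_{w,2d} −1 ≥ 0, then E(x_i) > 0 for every E ∈ ℰ^c_{w,2d}(Q); (ii) if Q₁ ⊢^{c'}_{w,2d} −1 ≥ 0, then E(x̄_i) > 0 for every E ∈ ℰ^c_{w,2d}(Q). -/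
open MvPolynomial

noncomputable section

/-! Modulo the Boolean axioms `xᵥ ≡ xᵥ²`, so `E(xᵥ) = E(xᵥ²) ≥ 0`; suppose `E(xᵥ) = 0`.
Cauchy–Schwarz for the positive semidefinite form `(f, g) ↦ E(fg)` on polynomials of degree at
most `d` gives `E(fg) = 0` whenever `E(f²) = 0`. As `(f xᵤ)² ≡ f · (f xᵤ)`, the polynomials with
`E(f²) = 0` are closed under multiplication by variables within degree `d`, and splitting a
monomial of degree `< 2d` between the two factors shows `E(t xᵥ) = 0` whenever `deg t < 2d`. But a
refutation of the system extended by `xᵥ = 0` is a proof of `-1 - t xᵥ ≥ 0` from the original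
system with `deg t < 2d`, where `t` is the multiplier of the new constraint, and then
`E(-1 - t xᵥ) = -1`. -/

def booleanIdeal (n : ℕ) : Ideal (MvPoly n) := Ideal.span (Set.range (boolAxiom n))

theorem X_sq_sub_X_mem_booleanIdeal {n : ℕ} (v : Fin n ⊕ Fin n) :
    (X v : MvPoly n) ^ 2 - X v ∈ booleanIdeal n := by
  obtain ⟨a, ha⟩ : ∃ a, boolAxiom n a = X v ^ 2 - X v := by
    rcases v with j | j
    · exact ⟨(0, j), by simp [boolAxiom]⟩
    · exact ⟨(1, j), by simp [boolAxiom]⟩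
  exact ha ▸ Ideal.subset_span ⟨a, rfl⟩

structure IsBooleanPSD {n : ℕ} (d : ℕ) (L : MvPoly n →ₗ[ℝ] ℝ) : Prop where
  map_sq_nonneg : ∀ f : MvPoly n, f.totalDegree ≤ d → 0 ≤ L (f ^ 2)
  map_eq_zero_of_mem : ∀ g ∈ booleanIdeal n, g.totalDegree ≤ 2 * d → L g = 0

namespace IsBooleanPSD

variable {n d : ℕ} {L : MvPoly n →ₗ[ℝ] ℝ}

theorem map_mul_X_sq (hL : IsBooleanPSD d L) {h : MvPoly n} (v : Fin n ⊕ Fin n)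
    (hh : h.totalDegree + 2 ≤ 2 * d) : L (h * X v ^ 2) = L (h * X v) := by
  have hdeg : ((X v : MvPoly n) ^ 2 - X v).totalDegree ≤ 2 :=
    (totalDegree_sub _ _).trans (by simp)
  have h0 := hL.map_eq_zero_of_mem (h * (X v ^ 2 - X v))
    (Ideal.mul_mem_left _ h (X_sq_sub_X_mem_booleanIdeal v))
    ((totalDegree_mul _ _).trans (by omega))
  rwa [mul_sub, map_sub, sub_eq_zero] at h0

/-- Cauchy–Schwarz for the positive semidefinite form `(f, g) ↦ L (f * g)`. -/
theorem map_mul_eq_zero_of_map_sq_eq_zero (hL : IsBooleanPSD d L) {f g : MvPoly n}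
    (hf : f.totalDegree ≤ d) (hg : g.totalDegree ≤ d) (hf0 : L (f ^ 2) = 0) :
    L (f * g) = 0 := by
  have hquad : ∀ a : ℝ, 0 ≤ 0 * (a * a) + 2 * L (f * g) * a + L (g ^ 2) := fun a => by
    have hsq := hL.map_sq_nonneg (a • f + g)
      ((totalDegree_add _ _).trans (max_le ((totalDegree_smul_le a f).trans hf) hg))
    have hexp : (a • f + g) ^ 2 = (a * a) • f ^ 2 + (2 * a) • (f * g) + g ^ 2 := by
      simp only [smul_eq_C_mul, map_mul, map_ofNat]
      ring
    rw [hexp, map_add, map_add, map_smul, map_smul, hf0, smul_eq_mul, smul_eq_mul] at hsq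
    linarith
  have hdisc := discrim_le_zero hquad
  rw [discrim] at hdisc
  nlinarith [sq_nonneg (L (f * g))]

theorem map_sq_mul_X_eq_zero (hL : IsBooleanPSD d L) {f : MvPoly n} (v : Fin n ⊕ Fin n)
    (hf : f.totalDegree + 1 ≤ d) (hf0 : L (f ^ 2) = 0) : L ((f * X v) ^ 2) = 0 := by
  have hfX : (f * X v).totalDegree ≤ d :=
    (totalDegree_mul _ _).trans (by rw [totalDegree_X]; exact hf)
  calc L ((f * X v) ^ 2) = L (f ^ 2 * X v ^ 2) := by rw [mul_pow]
    _ = L (f ^ 2 * X v) :=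
      hL.map_mul_X_sq v (by have := totalDegree_pow f 2; omega)
    _ = L (f * (f * X v)) := by rw [sq, mul_assoc]
    _ = 0 := hL.map_mul_eq_zero_of_map_sq_eq_zero (by omega) hfX hf0

theorem map_mul_monomial_eq_zero (hL : IsBooleanPSD d L) (s : (Fin n ⊕ Fin n) →₀ ℕ) (a : ℝ)
    {f : MvPoly n} (hf : f.totalDegree ≤ d) (hf0 : L (f ^ 2) = 0)
    (hfs : f.totalDegree + (monomial s a).totalDegree ≤ 2 * d) :
    L (f * monomial s a) = 0 := by
  refine induction_on_monomial (motive := fun g => ∀ f : MvPoly n, f.totalDegree ≤ d →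
    L (f ^ 2) = 0 → f.totalDegree + g.totalDegree ≤ 2 * d → L (f * g) = 0) ?_ ?_ s a f hf hf0 hfs
  · intro a f hf hf0 _
    have hf1 : L (f * 1) = 0 := hL.map_mul_eq_zero_of_map_sq_eq_zero hf (by simp) hf0
    rw [mul_one] at hf1
    rw [mul_comm, ← smul_eq_C_mul, map_smul, hf1, smul_zero]
  · intro g v ih f hf hf0 hfs
    by_cases hfd : f.totalDegree + 1 ≤ d
    · rcases eq_or_ne g 0 with rfl | hg
      · simp
      rw [totalDegree_mul_of_isDomain hg (X_ne_zero v), totalDegree_X] at hfs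
      have hfX : (f * X v).totalDegree ≤ f.totalDegree + 1 :=
        (totalDegree_mul _ _).trans (by rw [totalDegree_X])
      rw [show f * (g * X v) = f * X v * g by ring]
      exact ih _ (hfX.trans hfd) (hL.map_sq_mul_X_eq_zero v hfd hf0) (by omega)
    · -- `deg f = d`, so `deg (g xᵥ) ≤ d` and Cauchy–Schwarz applies directly
      exact hL.map_mul_eq_zero_of_map_sq_eq_zero hf (by omega) hf0

theorem map_mul_eq_zero_of_map_sq_eq_zero_of_totalDegree_add_le (hL : IsBooleanPSD d L)
    {f g : MvPoly n} (hf : f.totalDegree ≤ d) (hf0 : L (f ^ 2) = 0)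
    (hfg : f.totalDegree + g.totalDegree ≤ 2 * d) : L (f * g) = 0 := by
  rw [g.as_sum, Finset.mul_sum, map_sum]
  refine Finset.sum_eq_zero fun s hs => hL.map_mul_monomial_eq_zero s _ hf hf0 ?_
  have := (totalDegree_monomial_le s (g.coeff s)).trans (le_totalDegree hs)
  omega

theorem map_X_sq (hL : IsBooleanPSD d L) (hd : 0 < d) (v : Fin n ⊕ Fin n) :
    L (X v ^ 2) = L (X v) := by
  simpa using hL.map_mul_X_sq (h := 1) v (by rw [totalDegree_one]; omega)

theorem map_X_nonneg (hL : IsBooleanPSD d L) (hd : 0 < d) (v : Fin n ⊕ Fin n) :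
    0 ≤ L (X v) :=
  hL.map_X_sq hd v ▸ hL.map_sq_nonneg (X v) (by rw [totalDegree_X]; omega)

theorem map_mul_X_eq_zero (hL : IsBooleanPSD d L) (hd : 0 < d) {v : Fin n ⊕ Fin n}
    (hv : L (X v) = 0) {t : MvPoly n} (ht : t.totalDegree + 1 ≤ 2 * d) :
    L (t * X v) = 0 := by
  rw [mul_comm]
  exact hL.map_mul_eq_zero_of_map_sq_eq_zero_of_totalDegree_add_le
    (by rw [totalDegree_X]; omega) (hv ▸ hL.map_X_sq hd v) (by rw [totalDegree_X]; omega)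

end IsBooleanPSD

section PScone

variable {n ℓ m : ℕ} {q : Fin ℓ → MvPoly n} {p : Fin m → MvPoly n}
  {c : Finset (Fin ℓ) ⊕ Fin m → ℕ} {w D : ℕ}

theorem mem_PScone_of_eq_sosOf_add {g : MvPoly n} (l : List (MvPoly n))
    (u : Fin 3 × Fin n → MvPoly n) (hg : g = sosOf l + ∑ a, u a * boolAxiom n a)
    (hgD : g.totalDegree ≤ D) (hlD : (sosOf l).totalDegree ≤ D) :
    g ∈ PScone n ℓ m q p c w D :=
  ⟨hgD, ⟨∅, Finset.notMem_empty _, l, fun _ => [], 0, u, by simp [hg]⟩,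
    ⟨hgD, hlD, by simp, by simp⟩, by simp [PSProof.widthLE]⟩

theorem sq_mem_PScone {f : MvPoly n} (hf : 2 * f.totalDegree ≤ D) :
    f ^ 2 ∈ PScone n ℓ m q p c w D :=
  have hsos : sosOf [f] = f ^ 2 := by simp [sosOf]
  have hdeg : (f ^ 2).totalDegree ≤ D := (totalDegree_pow f 2).trans hf
  mem_PScone_of_eq_sosOf_add [f] 0 (by simp [hsos]) hdeg (hsos ▸ hdeg)

theorem mem_PScone_of_mem_booleanIdeal {g : MvPoly n} (hg : g ∈ booleanIdeal n)
    (hgD : g.totalDegree ≤ D) : g ∈ PScone n ℓ m q p c w D := by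
  obtain ⟨u, hu⟩ := Ideal.mem_span_range_iff_exists_fun.1 hg
  exact mem_PScone_of_eq_sosOf_add [] u (by simp [sosOf, hu]) hgD (by simp [sosOf])

theorem exists_sub_mul_mem_PScone_of_mem_PScone_snoc {g r : MvPoly n}
    {c' : Finset (Fin ℓ) ⊕ Fin (m + 1) → ℕ}
    (hc'l : ∀ J : Finset (Fin ℓ), c' (Sum.inl J) = c (Sum.inl J))
    (hc'r : ∀ j : Fin m, c' (Sum.inr j.castSucc) = c (Sum.inr j))
    (hr : r.totalDegree ≤ c' (Sum.inr (Fin.last m)))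
    (hg : g ∈ PScone n ℓ (m + 1) q (Fin.snoc p r) c' w D) :
    ∃ t : MvPoly n, (t ≠ 0 → t.totalDegree + c' (Sum.inr (Fin.last m)) ≤ D) ∧
      g - t * r ∈ PScone n ℓ m q p c w D := by
  obtain ⟨hgD, π, ⟨-, hr0, hJs, ht⟩, hπw⟩ := hg
  set t := π.t (Fin.last m)
  have hdeg : (g - t * r).totalDegree ≤ D := by
    refine (totalDegree_sub _ _).trans (max_le hgD ?_)
    rcases eq_or_ne t 0 with ht0 | ht0
    · simp [ht0]
    · have htD : t.totalDegree + c' (Sum.inr (Fin.last m)) ≤ D := ht _ ht0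
      exact (totalDegree_mul _ _).trans (by omega)
  have hid := π.identity
  rw [Fin.sum_univ_castSucc, Fin.snoc_last] at hid
  simp only [Fin.snoc_castSucc] at hid
  refine ⟨t, ht _, hdeg, ⟨π.Js, π.empty_not_mem, π.r0, π.r, fun j => π.t j.castSucc, π.u,
    by linear_combination hid⟩, ⟨hdeg, hr0, fun J hJ hne => ?_, fun j hj => ?_⟩, hπw⟩
  · exact hc'l J ▸ hJs J hJ hne
  · exact hc'r j ▸ ht _ hj

variable {d : ℕ} {E : restrictTotalDegree (Fin n ⊕ Fin n) ℝ D →ₗ[ℝ] ℝ}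
  {L : MvPoly n →ₗ[ℝ] ℝ}

theorem map_nonneg_of_mem_PScone (hE : E ∈ PseudoExp n ℓ m q p c w D)
    (hLE : L.comp (restrictTotalDegree (Fin n ⊕ Fin n) ℝ D).subtype = E) {g : MvPoly n}
    (hg : g ∈ PScone n ℓ m q p c w D) : 0 ≤ L g := by
  have hgD : g ∈ restrictTotalDegree (Fin n ⊕ Fin n) ℝ D := (mem_restrictTotalDegree _ _ _).2 hg.1
  simpa [← hLE] using hE.2 ⟨g, hgD⟩ hg

theorem isBooleanPSD_of_mem_PseudoExp {E : restrictTotalDegree (Fin n ⊕ Fin n) ℝ (2 * d) →ₗ[ℝ] ℝ}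
    (hE : E ∈ PseudoExp n ℓ m q p c w (2 * d))
    (hLE : L.comp (restrictTotalDegree (Fin n ⊕ Fin n) ℝ (2 * d)).subtype = E) :
    IsBooleanPSD d L where
  map_sq_nonneg f hf := map_nonneg_of_mem_PScone hE hLE (sq_mem_PScone (by omega))
  map_eq_zero_of_mem g hg hgD := by
    have hneg := map_nonneg_of_mem_PScone hE hLE
      (mem_PScone_of_mem_booleanIdeal (neg_mem hg) (by rwa [totalDegree_neg]))
    have hpos := map_nonneg_of_mem_PScone hE hLE (mem_PScone_of_mem_booleanIdeal hg hgD)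
    rw [map_neg] at hneg
    linarith

theorem map_one_of_mem_PseudoExp (hE : E ∈ PseudoExp n ℓ m q p c w D)
    (hLE : L.comp (restrictTotalDegree (Fin n ⊕ Fin n) ℝ D).subtype = E) : L 1 = 1 := by
  have h1 : (1 : MvPoly n) ∈ restrictTotalDegree (Fin n ⊕ Fin n) ℝ D :=
    (mem_restrictTotalDegree _ _ _).2 (by simp)
  simpa [← hLE] using hE.1 ⟨1, h1⟩ rfl

end PScone

theorem pos_of_refutation_snoc_X {n d ℓ m w : ℕ} (hd : 0 < d) {q : Fin ℓ → MvPoly n}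
    {p : Fin m → MvPoly n} {c : Finset (Fin ℓ) ⊕ Fin m → ℕ}
    {c' : Finset (Fin ℓ) ⊕ Fin (m + 1) → ℕ}
    (hc'l : ∀ J : Finset (Fin ℓ), c' (Sum.inl J) = c (Sum.inl J))
    (hc'r : ∀ j : Fin m, c' (Sum.inr j.castSucc) = c (Sum.inr j))
    (hc'new : c' (Sum.inr (Fin.last m)) = 1) (v : Fin n ⊕ Fin n)
    (href : (-1 : MvPoly n) ∈ PScone n ℓ (m + 1) q (Fin.snoc p (X v)) c' w (2 * d))
    {E : restrictTotalDegree (Fin n ⊕ Fin n) ℝ (2 * d) →ₗ[ℝ] ℝ}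
    (hE : E ∈ PseudoExp n ℓ m q p c w (2 * d))
    (xP : restrictTotalDegree (Fin n ⊕ Fin n) ℝ (2 * d)) (hxP : (xP : MvPoly n) = X v) :
    0 < E xP := by
  obtain ⟨L, hLE⟩ := LinearMap.exists_extend E
  have hL := isBooleanPSD_of_mem_PseudoExp hE hLE
  obtain ⟨t, ht, hmem⟩ := exists_sub_mul_mem_PScone_of_mem_PScone_snoc hc'l hc'r
    (by rw [hc'new, totalDegree_X]) href
  have htD : t.totalDegree + 1 ≤ 2 * d := by
    rcases eq_or_ne t 0 with rfl | ht0
    · rw [totalDegree_zero]; omega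
    · exact hc'new ▸ ht ht0
  have hEL : E xP = L (X v) := by rw [← hxP, ← hLE]; rfl
  rw [hEL]
  refine (hL.map_X_nonneg hd v).lt_of_ne fun hv => ?_
  have hrefute := map_nonneg_of_mem_PScone hE hLE hmem
  rw [map_sub, hL.map_mul_X_eq_zero hd hv.symm htD, map_neg,
    map_one_of_mem_PseudoExp hE hLE] at hrefute
  linarith

theorem statement6_general (n d w : ℕ) (hd : 0 < d) (ℓ m : ℕ)
    (q : Fin ℓ → MvPoly n) (p : Fin m → MvPoly n)
    (c : Finset (Fin ℓ) ⊕ Fin m → ℕ) (i : Fin n)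
    (p0 p1 : Fin (m + 1) → MvPoly n)
    (hp0 : p0 = Fin.snoc p (X (Sum.inl i))) (hp1 : p1 = Fin.snoc p (X (Sum.inr i)))
    (c' : Finset (Fin ℓ) ⊕ Fin (m + 1) → ℕ)
    (hc'l : ∀ J : Finset (Fin ℓ), c' (Sum.inl J) = c (Sum.inl J))
    (hc'r : ∀ j : Fin m, c' (Sum.inr j.castSucc) = c (Sum.inr j))
    (hc'new : c' (Sum.inr (Fin.last m)) = 1) :
    (((-1 : MvPoly n) ∈ PScone n ℓ (m + 1) q p0 c' w (2 * d)) →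
      ∀ E ∈ PseudoExp n ℓ m q p c w (2 * d),
        ∀ xP : restrictTotalDegree (Fin n ⊕ Fin n) ℝ (2 * d),
          (xP : MvPoly n) = X (Sum.inl i) → 0 < E xP) ∧
    (((-1 : MvPoly n) ∈ PScone n ℓ (m + 1) q p1 c' w (2 * d)) →
      ∀ E ∈ PseudoExp n ℓ m q p c w (2 * d),
        ∀ xP : restrictTotalDegree (Fin n ⊕ Fin n) ℝ (2 * d),
          (xP : MvPoly n) = X (Sum.inr i) → 0 < E xP) := by
  subst hp0 hp1
  exact ⟨fun href _ hE => pos_of_refutation_snoc_X hd hc'l hc'r hc'new _ href hE,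
    fun href _ hE => pos_of_refutation_snoc_X hd hc'l hc'r hc'new _ href hE⟩

/-- **Lemma 6.** With `Q₀`, `Q₁` and `c'` as in the unrestricting lemma: if `Q₀`
(resp. `Q₁`) has a mod-`c'` degree-`2d` refutation of product-width at most `w`,
then `E(xᵢ) > 0` (resp. `E(x̄ᵢ) > 0`) for every `E ∈ ℰ^c_{w,2d}(Q)`. -/
theorem statement6 (n d w : ℕ) (hn : 0 < n) (hd : 0 < d) (hw : 0 < w) (ℓ m : ℕ)
    (q : Fin ℓ → MvPoly n) (p : Fin m → MvPoly n)
    (c : Finset (Fin ℓ) ⊕ Fin m → ℕ) (hc : IsCutoff q p c) (i : Fin n)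
    (p0 p1 : Fin (m + 1) → MvPoly n)
    (hp0 : p0 = Fin.snoc p (X (Sum.inl i))) (hp1 : p1 = Fin.snoc p (X (Sum.inr i)))
    (c' : Finset (Fin ℓ) ⊕ Fin (m + 1) → ℕ)
    (hc'l : ∀ J : Finset (Fin ℓ), c' (Sum.inl J) = c (Sum.inl J))
    (hc'r : ∀ j : Fin m, c' (Sum.inr j.castSucc) = c (Sum.inr j))
    (hc'new : c' (Sum.inr (Fin.last m)) = 1) :
    (((-1 : MvPoly n) ∈ PScone n ℓ (m + 1) q p0 c' w (2 * d)) →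
      ∀ E ∈ PseudoExp n ℓ m q p c w (2 * d),
        ∀ xP : restrictTotalDegree (Fin n ⊕ Fin n) ℝ (2 * d),
          (xP : MvPoly n) = X (Sum.inl i) → 0 < E xP) ∧
    (((-1 : MvPoly n) ∈ PScone n ℓ (m + 1) q p1 c' w (2 * d)) →
      ∀ E ∈ PseudoExp n ℓ m q p c w (2 * d),
        ∀ xP : restrictTotalDegree (Fin n ⊕ Fin n) ℝ (2 * d),
          (xP : MvPoly n) = X (Sum.inr i) → 0 < E xP) :=
  statement6_general n d w hd ℓ m q p c i p0 p1 hp0 hp1 c' hc'l hc'r hc'new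
end
end

section
/- For every two positive integers s and w and every indexed set Q of polynomials on n pairs of twin variables: if there is a PS refutation from Q of monomial size at most s and product-width at most w, then there is a multilinear PS refutation from Q of monomial size at most s and product-width at most w. -/
open MvPolynomial

noncomputable section

/-- A polynomial is multilinear if no variable occurs with exponent `≥ 2`. -/
def IsMultilinearPoly {n : ℕ} (r : MvPoly n) : Prop :=
  ∀ α ∈ r.support, ∀ v, α v ≤ 1

/-- A PS proof is multilinear if all the `r` and `t` polynomials are multilinear. -/
def PSProof.Multilinear {n ℓ m : ℕ} {q : Fin ℓ → MvPoly n} {p : Fin m → MvPoly n}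
    {goal : MvPoly n} (π : PSProof n ℓ m q p goal) : Prop :=
  (∀ r ∈ π.r0, IsMultilinearPoly r) ∧
  (∀ J ∈ π.Js, ∀ r ∈ π.r J, IsMultilinearPoly r) ∧
  (∀ j, IsMultilinearPoly (π.t j))

/-! ### Auxiliary material for the proof -/

/-- Truncation of an exponent vector: every exponent is replaced by `min · 1`. -/
def truncExp {n : ℕ} (α : (Fin n ⊕ Fin n) →₀ ℕ) : (Fin n ⊕ Fin n) →₀ ℕ :=
  α.mapRange (min · 1) (by simp)

@[simp] lemma truncExp_apply {n : ℕ} (α : (Fin n ⊕ Fin n) →₀ ℕ) (v) :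
    truncExp α v = min (α v) 1 := rfl

/-- Multilinearization of a polynomial: truncate every monomial. -/
def mlin {n : ℕ} (f : MvPoly n) : MvPoly n :=
  ∑ α ∈ f.support, monomial (truncExp α) (f.coeff α)

lemma mlin_isMultilinear {n : ℕ} (f : MvPoly n) : IsMultilinearPoly (mlin f) := by
  intro α hα v
  have h := MvPolynomial.support_sum (f := fun β => (monomial (truncExp β) (f.coeff β))) hα
  simp only [Finset.mem_biUnion] at h
  obtain ⟨β, -, hβ⟩ := h
  have : α = truncExp β := by
    have := MvPolynomial.support_monomial_subset hβ
    simpa using this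
  subst this
  simp

lemma mlin_support_card_le {n : ℕ} (f : MvPoly n) :
    (mlin f).support.card ≤ f.support.card := by
  have hsub : (mlin f).support ⊆ f.support.image truncExp := by
    intro α hα
    have h := MvPolynomial.support_sum (f := fun β => (monomial (truncExp β) (f.coeff β))) hα
    simp only [Finset.mem_biUnion] at h
    obtain ⟨β, hβs, hβ⟩ := h
    have : α = truncExp β := by
      have := MvPolynomial.support_monomial_subset hβ
      simpa using this
    exact Finset.mem_image.2 ⟨β, hβs, this.symm⟩
  exact le_trans (Finset.card_le_card hsub) (Finset.card_image_le)

/-- The ideal generated by the Boolean axioms. -/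
def boolIdeal (n : ℕ) : Ideal (MvPoly n) := Ideal.span (Set.range (boolAxiom n))

lemma sq_sub_mem_boolIdeal {n : ℕ} (v : Fin n ⊕ Fin n) :
    (X v ^ 2 - X v : MvPoly n) ∈ boolIdeal n := by
  apply Ideal.subset_span
  cases v with
  | inl i => exact ⟨(0, i), by simp [boolAxiom]⟩
  | inr i => exact ⟨(1, i), by simp [boolAxiom]⟩

lemma boolAxiom_mem {n : ℕ} (a : Fin 3 × Fin n) : boolAxiom n a ∈ boolIdeal n :=
  Ideal.subset_span ⟨a, rfl⟩

lemma idem_pow_succ {R : Type*} [Monoid R] {y : R} (h : y ^ 2 = y) :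
    ∀ e, y ^ (e + 1) = y := by
  intro e
  induction e with
  | zero => simp
  | succ k ih => rw [pow_succ, ih, ← pow_two, h]

lemma idem_pow_min {R : Type*} [Monoid R] {y : R} (h : y ^ 2 = y) (e : ℕ) :
    y ^ e = y ^ min e 1 := by
  cases e with
  | zero => simp
  | succ k =>
    have hm : min (k + 1) 1 = 1 := by omega
    rw [idem_pow_succ h, hm, pow_one]

lemma mk_X_sq {n : ℕ} (v : Fin n ⊕ Fin n) :
    (Ideal.Quotient.mk (boolIdeal n) (X v)) ^ 2 = Ideal.Quotient.mk (boolIdeal n) (X v) := by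
  have h := Ideal.Quotient.eq_zero_iff_mem.2 (sq_sub_mem_boolIdeal v)
  rw [map_sub, map_pow, sub_eq_zero] at h
  exact h

lemma mk_monomial_trunc {n : ℕ} (α : (Fin n ⊕ Fin n) →₀ ℕ) (c : ℝ) :
    Ideal.Quotient.mk (boolIdeal n) (monomial (truncExp α) c) =
      Ideal.Quotient.mk (boolIdeal n) (monomial α c) := by
  rw [MvPolynomial.monomial_eq, MvPolynomial.monomial_eq,
    Finsupp.prod_fintype _ _ (fun v => pow_zero (X v)),
    Finsupp.prod_fintype _ _ (fun v => pow_zero (X v))]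
  rw [map_mul, map_mul, map_prod, map_prod]
  congr 1
  refine Finset.prod_congr rfl fun v _ => ?_
  rw [map_pow, map_pow, truncExp_apply, ← idem_pow_min (mk_X_sq v)]

/-- Modulo the Boolean ideal, every polynomial equals its multilinearization. -/
lemma mk_mlin {n : ℕ} (f : MvPoly n) :
    Ideal.Quotient.mk (boolIdeal n) (mlin f) = Ideal.Quotient.mk (boolIdeal n) f := by
  conv_rhs => rw [f.as_sum]
  rw [mlin, map_sum, map_sum]
  exact Finset.sum_congr rfl fun α _ => mk_monomial_trunc α (f.coeff α)

lemma mk_sosOf_mlin {n : ℕ} (l : List (MvPoly n)) :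
    Ideal.Quotient.mk (boolIdeal n) (sosOf (l.map mlin)) =
      Ideal.Quotient.mk (boolIdeal n) (sosOf l) := by
  induction l with
  | nil => simp [sosOf]
  | cons a l ih =>
    simp only [List.map_cons, sosOf, List.sum_cons, map_add, map_pow] at *
    rw [mk_mlin, ih]

lemma sosOf_mlin_size_le {n : ℕ} (l : List (MvPoly n)) :
    ((l.map mlin).map fun r => r.support.card).sum ≤ (l.map fun r => r.support.card).sum := by
  rw [List.map_map]
  exact List.sum_le_sum fun r _ => mlin_support_card_le r

/-- **Lemma 8 (multilinearization).** A PS refutation of monomial size at most `s`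
and product-width at most `w` can be turned into a multilinear one of the same
size and product-width bounds. -/
theorem statement8 (n : ℕ) (s w : ℕ) (hs : 0 < s) (hw : 0 < w) (ℓ m : ℕ)
    (q : Fin ℓ → MvPoly n) (p : Fin m → MvPoly n)
    (h : ∃ π : PSProof n ℓ m q p (-1), π.size ≤ s ∧ π.widthLE w) :
    ∃ π : PSProof n ℓ m q p (-1), π.Multilinear ∧ π.size ≤ s ∧ π.widthLE w := by
  classical
  obtain ⟨π, hsize, hwidth⟩ := h
  set mk := Ideal.Quotient.mk (boolIdeal n) with hmkdef
  set A' : MvPoly n := sosOf (π.r0.map mlin)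
      + ∑ J ∈ π.Js, sosOf ((π.r J).map mlin) * ∏ j ∈ J, q j
      + ∑ j, mlin (π.t j) * p j with hA'
  set A : MvPoly n := sosOf π.r0
      + ∑ J ∈ π.Js, sosOf (π.r J) * ∏ j ∈ J, q j
      + ∑ j, π.t j * p j with hA
  have hmem : (-1 : MvPoly n) - A' ∈ boolIdeal n := by
    rw [← Ideal.Quotient.eq_zero_iff_mem]
    have h1 : mk (-1 : MvPoly n) = mk A := by
      have hid := π.identity
      rw [hid, ← hA, map_add]
      have hz : mk (∑ a, π.u a * boolAxiom n a) = 0 := by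
        rw [map_sum]
        refine Finset.sum_eq_zero fun a _ => ?_
        rw [map_mul, hmkdef, Ideal.Quotient.eq_zero_iff_mem.2 (boolAxiom_mem a), mul_zero]
      rw [hz, add_zero]
    have h2 : mk A' = mk A := by
      rw [hA', hA]
      simp only [map_add, map_sum, map_mul]
      rw [hmkdef]
      rw [mk_sosOf_mlin]
      congr 1
      · congr 1
        exact Finset.sum_congr rfl fun J _ => by rw [mk_sosOf_mlin]
      · exact Finset.sum_congr rfl fun j _ => by rw [mk_mlin]
    show mk (-1 - A') = 0
    rw [map_sub, h1, h2, sub_self]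
  obtain ⟨u', hu'⟩ := (Submodule.mem_span_range_iff_exists_fun _).1 hmem
  have hu'' : ∑ a, u' a * boolAxiom n a = -1 - A' := by
    simpa [smul_eq_mul] using hu'
  refine ⟨{ Js := π.Js, empty_not_mem := π.empty_not_mem,
            r0 := π.r0.map mlin, r := fun J => (π.r J).map mlin,
            t := fun j => mlin (π.t j), u := u',
            identity := ?_ }, ?_, ?_, ?_⟩
  · show (-1 : MvPoly n) = A' + ∑ a, u' a * boolAxiom n a
    rw [hu'']
    ring
  · refine ⟨fun r hr => ?_, fun J _ r hr => ?_, fun j => mlin_isMultilinear _⟩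
    · obtain ⟨a, -, rfl⟩ := List.mem_map.1 hr
      exact mlin_isMultilinear a
    · obtain ⟨a, -, rfl⟩ := List.mem_map.1 hr
      exact mlin_isMultilinear a
  · refine le_trans ?_ hsize
    unfold PSProof.size
    refine add_le_add (add_le_add (sosOf_mlin_size_le _) ?_) ?_
    · exact Finset.sum_le_sum fun J _ => sosOf_mlin_size_le _
    · exact Finset.sum_le_sum fun j _ => mlin_support_card_le _
  · exact hwidth
end
end

section
/- Let ⟨V, ≤⟩ be a pre-ordered vector space with an order unit e. Let U be a linear subspace of V containing e, let L be a positive linear functional on U, let p ∈ V ∖ U, and let γ ∈ ℝ satisfy d_p^L ≤ γ ≤ u_p^L. Then there is a positive linear functional L' defined on span({p} ∪ U) that extends L and satisfies L'(p) = γ. -/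
/-!
Extend `L` by `L' (a • p + u) = a * γ + L u`, which is well defined because `p ∉ U`.
If `a • p + u ≥ 0` with `a > 0`, then `-(a⁻¹ • u) ≤ p`, so `L (-(a⁻¹ • u)) ≤ d_p^L ≤ γ`,
which rearranges to `a * γ + L u ≥ 0`; the case `a < 0` is symmetric with `u_p^L`.
The order unit bounds both sets of values, so that `sSup` and `sInf` are the genuine
supremum and infimum rather than junk values.
-/

structure IsVectorPreorder {V : Type*} [AddCommGroup V] [Module ℝ V] (le : V → V → Prop) :
    Prop where
  refl : ∀ v, le v v
  trans : ∀ a b c, le a b → le b c → le a c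
  add : ∀ p₁ q₁ p₂ q₂, le p₁ q₁ → le p₂ q₂ → le (p₁ + p₂) (q₁ + q₂)
  smul : ∀ a : ℝ, 0 ≤ a → ∀ p q, le p q → le (a • p) (a • q)

def IsPositiveFunctional {V : Type*} [AddCommGroup V] [Module ℝ V] (le : V → V → Prop)
    {U : Submodule ℝ V} (L : U →ₗ[ℝ] ℝ) : Prop :=
  ∀ u : U, le 0 (u : V) → 0 ≤ L u

theorem exists_mem_ge_of_orderUnit {V : Type*} [AddCommGroup V] [Module ℝ V]
    {le : V → V → Prop} {U : Submodule ℝ V} {e : V}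
    (hunit : ∀ p : V, ∃ r : ℝ, 0 ≤ r ∧ le p (r • e)) (heU : e ∈ U) (p : V) :
    ∃ w : U, le p w :=
  let ⟨r, _, hr⟩ := hunit p
  ⟨⟨r • e, U.smul_mem r heU⟩, hr⟩

namespace IsVectorPreorder

variable {V : Type*} [AddCommGroup V] [Module ℝ V] {le : V → V → Prop}

theorem add_right (hle : IsVectorPreorder le) {a b : V} (h : le a b) (c : V) :
    le (a + c) (b + c) :=
  hle.add a b c c h (hle.refl c)

theorem le_iff_nonneg_sub (hle : IsVectorPreorder le) {a b : V} : le a b ↔ le 0 (b - a) := by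
  constructor
  · intro h
    simpa [sub_eq_add_neg] using hle.add_right h (-a)
  · intro h
    simpa using hle.add_right h a

theorem smul_nonneg (hle : IsVectorPreorder le) {a : ℝ} (ha : 0 ≤ a) {v : V} (h : le 0 v) :
    le 0 (a • v) := by
  simpa using hle.smul a ha 0 v h

variable {U : Submodule ℝ V} {L : U →ₗ[ℝ] ℝ}

theorem apply_le_apply (hle : IsVectorPreorder le) (hL : IsPositiveFunctional le L)
    {v w : U} (h : le v w) : L v ≤ L w := by
  have := hL (w - v) (by simpa using hle.le_iff_nonneg_sub.1 h)
  simpa [sub_nonneg] using this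

theorem mul_add_apply_nonneg_of_nonneg_smul_add (hle : IsVectorPreorder le)
    (hL : IsPositiveFunctional le L) {p : V} {γ : ℝ}
    (hlow : ∀ v : U, le (v : V) p → L v ≤ γ) (hupp : ∀ v : U, le p (v : V) → γ ≤ L v)
    {a : ℝ} {u : U} (h : le 0 (a • p + u)) : 0 ≤ a * γ + L u := by
  rcases lt_trichotomy a 0 with ha | rfl | ha
  · have hle' : le p (((-a)⁻¹ • u : U) : V) := by
      rw [hle.le_iff_nonneg_sub]
      convert hle.smul_nonneg (inv_nonneg.2 (neg_nonneg.2 ha.le)) h using 1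
      rw [smul_add, smul_smul, inv_neg, neg_mul, inv_mul_cancel₀ ha.ne]
      simp [sub_eq_add_neg, add_comm]
    have := hupp _ hle'
    rw [map_smul, smul_eq_mul, le_inv_mul_iff₀ (neg_pos.2 ha)] at this
    linarith
  · simpa using hL u (by simpa using h)
  · have hle' : le ((-(a⁻¹ • u) : U) : V) p := by
      rw [hle.le_iff_nonneg_sub]
      convert hle.smul_nonneg (inv_nonneg.2 ha.le) h using 1
      rw [smul_add, smul_smul, inv_mul_cancel₀ ha.ne', one_smul]
      simp [sub_eq_add_neg]
    have := hlow _ hle'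
    rw [map_neg, map_smul, smul_eq_mul, neg_le, le_inv_mul_iff₀ ha] at this
    linarith

theorem bddAbove_values_le (hle : IsVectorPreorder le) (hL : IsPositiveFunctional le L)
    {p : V} {w : U} (hw : le p w) : BddAbove {x : ℝ | ∃ v : U, le (v : V) p ∧ L v = x} :=
  ⟨L w, by
    rintro _ ⟨v, hv, rfl⟩
    exact hle.apply_le_apply hL (hle.trans _ _ _ hv hw)⟩

theorem bddBelow_values_ge (hle : IsVectorPreorder le) (hL : IsPositiveFunctional le L)
    {p : V} {w : U} (hw : le w p) : BddBelow {x : ℝ | ∃ v : U, le p (v : V) ∧ L v = x} :=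
  ⟨L w, by
    rintro _ ⟨v, hv, rfl⟩
    exact hle.apply_le_apply hL (hle.trans _ _ _ hw hv)⟩

theorem exists_mem_le_of_orderUnit (hle : IsVectorPreorder le) {e : V}
    (hunit : ∀ p : V, ∃ r : ℝ, 0 ≤ r ∧ le p (r • e)) (heU : e ∈ U) (p : V) :
    ∃ w : U, le w p := by
  obtain ⟨w, hw⟩ := exists_mem_ge_of_orderUnit hunit heU (-p)
  refine ⟨-w, hle.le_iff_nonneg_sub.2 ?_⟩
  simpa [sub_eq_add_neg, add_comm] using hle.le_iff_nonneg_sub.1 hw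

end IsVectorPreorder

namespace Submodule

theorem exists_linearMap_span_insert {K E : Type*} [Field K] [AddCommGroup E] [Module K E]
    {U : Submodule K E} (L : U →ₗ[K] K) {p : E} (hp : p ∉ U) (γ : K) :
    ∃ L' : span K (insert p (U : Set E)) →ₗ[K] K,
      ∀ (a : K) (u : U) (w : span K (insert p (U : Set E))),
        (w : E) = a • p + u → L' w = a * γ + L u := by
  let g := (⟨U, L⟩ : E →ₗ.[K] K).supSpanSingleton p γ hp
  have hdom : span K (insert p (U : Set E)) ≤ g.domain := by
    rw [span_le, Set.insert_subset_iff]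
    exact ⟨mem_sup_right (mem_span_singleton_self p), fun _ hu => mem_sup_left hu⟩
  refine ⟨g.toFun ∘ₗ inclusion hdom, fun a u w hw => ?_⟩
  have : inclusion hdom w = ⟨(u : E) + a • p,
      mem_sup.2 ⟨u, u.2, _, mem_span_singleton.2 ⟨a, rfl⟩, rfl⟩⟩ :=
    Subtype.ext (by simp [hw, add_comm])
  change g (inclusion hdom w) = _
  rw [this, LinearPMap.supSpanSingleton_apply_mk (hx' := u.2)]
  simp [add_comm]

end Submodule

/-- **Lemma (one-step extension of positive functionals).** In a pre-ordered real
vector space `⟨V, le⟩` with order unit `e`, let `U` be a subspace containing `e`,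
`L` a positive linear functional on `U`, `p ∉ U`, and `γ` with
`d_p^L ≤ γ ≤ u_p^L`.  Then `L` extends to a positive linear functional `L'` on
`span({p} ∪ U)` with `L'(p) = γ`. -/
theorem statement11 (V : Type*) [AddCommGroup V] [Module ℝ V]
    (le : V → V → Prop)
    (hrefl : ∀ v, le v v)
    (htrans : ∀ a b c, le a b → le b c → le a c)
    (hadd : ∀ p₁ q₁ p₂ q₂, le p₁ q₁ → le p₂ q₂ → le (p₁ + p₂) (q₁ + q₂))
    (hsmul : ∀ a : ℝ, 0 ≤ a → ∀ p q, le p q → le (a • p) (a • q))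
    (e : V) (hunit : ∀ p : V, ∃ r : ℝ, 0 ≤ r ∧ le p (r • e))
    (U : Submodule ℝ V) (heU : e ∈ U)
    (L : U →ₗ[ℝ] ℝ) (hL : ∀ u : U, le 0 (u : V) → 0 ≤ L u)
    (p : V) (hp : p ∉ U) (γ : ℝ)
    (hγ₁ : sSup {x : ℝ | ∃ v : U, le (v : V) p ∧ L v = x} ≤ γ)
    (hγ₂ : γ ≤ sInf {x : ℝ | ∃ v : U, le p (v : V) ∧ L v = x}) :
    ∃ L' : Submodule.span ℝ (insert p (U : Set V)) →ₗ[ℝ] ℝ,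
      (∀ u : Submodule.span ℝ (insert p (U : Set V)), le 0 (u : V) → 0 ≤ L' u) ∧
      (∀ u : U, L' ⟨(u : V), Submodule.subset_span (Set.mem_insert_of_mem p u.2)⟩ = L u) ∧
      L' ⟨p, Submodule.subset_span (Set.mem_insert p (U : Set V))⟩ = γ := by
  have hle : IsVectorPreorder le := ⟨hrefl, htrans, hadd, hsmul⟩
  obtain ⟨wUp, hwUp⟩ := exists_mem_ge_of_orderUnit hunit heU p
  obtain ⟨wDown, hwDown⟩ := hle.exists_mem_le_of_orderUnit hunit heU p
  have hlow : ∀ v : U, le (v : V) p → L v ≤ γ := fun v hv =>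
    (le_csSup (hle.bddAbove_values_le hL hwUp) ⟨v, hv, rfl⟩).trans hγ₁
  have hupp : ∀ v : U, le p (v : V) → γ ≤ L v := fun v hv =>
    hγ₂.trans (csInf_le (hle.bddBelow_values_ge hL hwDown) ⟨v, hv, rfl⟩)
  obtain ⟨L', hL'⟩ := U.exists_linearMap_span_insert L hp γ
  refine ⟨L', fun w hw => ?_, fun u => by simpa using hL' 0 u _ (by simp),
    by simpa using hL' 1 0 _ (by simp)⟩
  obtain ⟨a, u, hu, hw_eq⟩ := Submodule.mem_span_insert.1 w.2
  rw [Submodule.span_eq] at hu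
  rw [hL' a ⟨u, hu⟩ w hw_eq]
  exact hle.mul_add_apply_nonneg_of_nonneg_smul_add hL hlow hupp (hw_eq ▸ hw)
end

section
/- Let ⟨V, ≤⟩ be a pre-ordered vector space with an order unit e. Then for every p ∈ V, sup{r ∈ ℝ : p ≥ r·e} = inf{E(p) : E ∈ ℰ(V)} (as elements of ℝ ∪ {±∞}). Moreover, if the set ℰ(V) is nonempty, then there is a pseudo-expectation achieving the infimum, i.e., min{E(p) : E ∈ ℰ(V)} is well-defined. -/
/-!
The function `N v = inf {t | v ≤ t • e}` is sublinear, and `sup {r | r • e ≤ p} = -N (-p)`.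
Hahn–Banach yields a linear `E ≤ N` with `E (-p) = N (-p)`; domination by `N` forces `E` to be
positive with `E e = 1`, so `E` is a pseudo-expectation with `E p = sup {r | r • e ≤ p}`, while
every pseudo-expectation satisfies `E p ≥ r` whenever `r • e ≤ p`. The infimum defining `N` is
finite unless `-e ≥ 0`; in that degenerate case there is no pseudo-expectation and `r • e ≤ p`
for arbitrarily large `r`.
-/

open Set Pointwise

theorem LinearMap.exists_le_sublinear_apply_eq {V : Type*} [AddCommGroup V] [Module ℝ V]
    (N : V → ℝ) (N_hom : ∀ c : ℝ, 0 < c → ∀ x, N (c • x) = c * N x)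
    (N_add : ∀ x y, N (x + y) ≤ N x + N y) (x : V) :
    ∃ g : V →ₗ[ℝ] ℝ, (∀ y, g y ≤ N y) ∧ g x = N x := by
  have N_zero : N 0 = 0 := by
    have := N_hom 2 two_pos 0
    rw [smul_zero] at this
    linarith
  have hx : ∀ c : ℝ, c • x = 0 → (RingHom.id ℝ) c • N x = 0 := by
    intro c hc
    rcases smul_eq_zero.1 hc with rfl | rfl
    · exact zero_smul _ _
    · rw [N_zero, smul_zero]
  have hf : ∀ y : (LinearPMap.mkSpanSingleton' x (N x) hx).domain,
      LinearPMap.mkSpanSingleton' x (N x) hx y ≤ N y := by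
    rintro ⟨y, hy⟩
    obtain ⟨c, rfl⟩ := Submodule.mem_span_singleton.1 hy
    rw [LinearPMap.mkSpanSingleton'_apply, RingHom.id_apply, smul_eq_mul]
    change c * N x ≤ N (c • x)
    rcases lt_trichotomy c 0 with hc | hc | hc
    · have := N_add (c • x) ((-c) • x)
      rw [← add_smul, add_neg_cancel, zero_smul, N_zero, N_hom (-c) (neg_pos.2 hc)] at this
      linarith
    · rw [hc, zero_mul, zero_smul, N_zero]
    · rw [N_hom c hc]
  obtain ⟨g, hgf, hgN⟩ := exists_extension_of_le_sublinear _ N N_hom N_add hf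
  exact ⟨g, hgN, (hgf ⟨x, Submodule.mem_span_singleton_self x⟩).trans
    (LinearPMap.mkSpanSingleton'_apply_self _ _ _ _)⟩

theorem EReal.sSup_image_coe_of_isLUB {S : Set ℝ} {a : ℝ} (h : IsLUB S a) :
    sSup ((↑) '' S : Set EReal) = a := by
  rw [← Monotone.map_csSup_of_continuousAt continuous_coe_real_ereal.continuousAt
    EReal.coe_strictMono.monotone h.nonempty ⟨a, h.1⟩, h.csSup_eq h.nonempty]

theorem EReal.sSup_image_coe_of_not_bddAbove {S : Set ℝ} (h : ¬BddAbove S) :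
    sSup ((↑) '' S : Set EReal) = ⊤ := by
  refine sSup_eq_top.2 fun b hb => ?_
  obtain ⟨x, hbx, -⟩ := EReal.lt_iff_exists_real_btwn.1 hb
  obtain ⟨r, hr, hxr⟩ := not_bddAbove_iff.1 h x
  exact ⟨r, mem_image_of_mem _ hr, hbx.trans (EReal.coe_lt_coe_iff.2 hxr)⟩

namespace PointedCone

variable {V : Type*} [AddCommGroup V] [Module ℝ V] (C : PointedCone ℝ V) (e : V)

def IsOrderUnit : Prop := ∀ v : V, ∃ r : ℝ, r • e - v ∈ C

def pseudoExpectations : Set (V →ₗ[ℝ] ℝ) := {E | (∀ v ∈ C, 0 ≤ E v) ∧ E e = 1}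

/-- Junk value `0` when `-e ∈ C`, where the set is not bounded below. -/
noncomputable def unitGauge (v : V) : ℝ := sInf {t : ℝ | t • e - v ∈ C}

variable {C e}

theorem nonneg_of_smul_mem (he : -e ∉ C) {c : ℝ} (hc : c • e ∈ C) : 0 ≤ c := by
  by_contra! hneg
  refine he ?_
  have := C.smul_mem (inv_nonneg.2 (neg_nonneg.2 hneg.le)) hc
  rwa [smul_smul, inv_neg, neg_mul, inv_mul_cancel₀ hneg.ne, neg_one_smul] at this

theorem bddBelow_setOf_smul_sub_mem (he : -e ∉ C) (hunit : IsOrderUnit C e) (v : V) :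
    BddBelow {t : ℝ | t • e - v ∈ C} := by
  obtain ⟨r, hr⟩ := hunit (-v)
  refine ⟨-r, fun t ht => ?_⟩
  have h : (t + r) • e ∈ C := by convert C.add_mem ht hr using 1; module
  linarith [nonneg_of_smul_mem he h]

theorem unitGauge_le (he : -e ∉ C) (hunit : IsOrderUnit C e) {v : V} {t : ℝ}
    (h : t • e - v ∈ C) : unitGauge C e v ≤ t :=
  csInf_le (bddBelow_setOf_smul_sub_mem he hunit v) h

theorem le_unitGauge (hunit : IsOrderUnit C e) {v : V} {b : ℝ}
    (h : ∀ t : ℝ, t • e - v ∈ C → b ≤ t) : b ≤ unitGauge C e v :=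
  le_csInf (hunit v) h

theorem unitGauge_smul {c : ℝ} (hc : 0 < c) (v : V) :
    unitGauge C e (c • v) = c * unitGauge C e v := by
  have hset : {t : ℝ | t • e - c • v ∈ C} = c • {t : ℝ | t • e - v ∈ C} := by
    ext t
    rw [mem_smul_set_iff_inv_smul_mem₀ hc.ne']
    change t • e - c • v ∈ C ↔ (c⁻¹ • t) • e - v ∈ C
    rw [← C.smul_mem_iff (inv_pos.2 hc)]
    simp only [smul_sub, smul_smul, inv_mul_cancel₀ hc.ne', one_smul, smul_eq_mul]
  rw [unitGauge, hset, Real.sInf_smul_of_nonneg hc.le, smul_eq_mul, unitGauge]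

theorem unitGauge_add_le (he : -e ∉ C) (hunit : IsOrderUnit C e) (v w : V) :
    unitGauge C e (v + w) ≤ unitGauge C e v + unitGauge C e w := by
  have key : ∀ t, t • e - v ∈ C → ∀ t', t' • e - w ∈ C → unitGauge C e (v + w) ≤ t + t' :=
    fun t ht t' ht' => unitGauge_le he hunit (by convert C.add_mem ht ht' using 1; module)
  have : unitGauge C e (v + w) - unitGauge C e w ≤ unitGauge C e v :=
    le_unitGauge hunit fun t ht => by
      have : unitGauge C e (v + w) - t ≤ unitGauge C e w :=
        le_unitGauge hunit fun t' ht' => by linarith [key t ht t' ht']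
      linarith
  linarith

theorem isLUB_neg_unitGauge_neg (he : -e ∉ C) (hunit : IsOrderUnit C e) (p : V) :
    IsLUB {r : ℝ | p - r • e ∈ C} (-unitGauge C e (-p)) := by
  have hmem : ∀ r : ℝ, p - r • e ∈ C ↔ (-r) • e - -p ∈ C := fun r => by
    rw [neg_smul, sub_neg_eq_add, neg_add_eq_sub]
  refine ⟨fun r hr => ?_, fun y hy => ?_⟩
  · linarith [unitGauge_le he hunit ((hmem r).1 hr)]
  · have : -y ≤ unitGauge C e (-p) := le_unitGauge hunit fun t ht => by
      have := hy ((hmem (-t)).2 (by rwa [neg_neg]))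
      linarith
    linarith

theorem mem_pseudoExpectations_of_le_unitGauge (he : -e ∉ C) (hunit : IsOrderUnit C e)
    {g : V →ₗ[ℝ] ℝ} (hg : ∀ v, g v ≤ unitGauge C e v) : g ∈ pseudoExpectations C e := by
  refine ⟨fun v hv => ?_, ?_⟩
  · have : unitGauge C e (-v) ≤ 0 := unitGauge_le he hunit (by simpa using hv)
    linarith [hg (-v), map_neg g v]
  · have h₁ : unitGauge C e e ≤ 1 := unitGauge_le he hunit (by simp [C.zero_mem])
    have h₂ : unitGauge C e (-e) ≤ -1 := unitGauge_le he hunit (by simp [C.zero_mem])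
    linarith [hg e, hg (-e), map_neg g e]

theorem le_apply_of_mem_pseudoExpectations {E : V →ₗ[ℝ] ℝ} (hE : E ∈ pseudoExpectations C e)
    {p : V} {r : ℝ} (hr : p - r • e ∈ C) : r ≤ E p := by
  have := hE.1 _ hr
  rw [map_sub, map_smul, hE.2, smul_eq_mul, mul_one] at this
  linarith

theorem exists_mem_pseudoExpectations_isLUB (he : -e ∉ C) (hunit : IsOrderUnit C e) (p : V) :
    ∃ E ∈ pseudoExpectations C e, IsLUB {r : ℝ | p - r • e ∈ C} (E p) := by
  obtain ⟨g, hgN, hg⟩ := LinearMap.exists_le_sublinear_apply_eq (unitGauge C e)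
    (fun _ hc v => unitGauge_smul hc v) (unitGauge_add_le he hunit) (-p)
  refine ⟨g, mem_pseudoExpectations_of_le_unitGauge he hunit hgN, ?_⟩
  rw [← neg_neg (g p), ← map_neg, hg]
  exact isLUB_neg_unitGauge_neg he hunit p

theorem pseudoExpectations_eq_empty (he : -e ∈ C) : pseudoExpectations C e = ∅ :=
  eq_empty_iff_forall_notMem.2 fun E hE => by
    have := hE.1 _ he
    rw [map_neg, hE.2] at this
    linarith

theorem not_bddAbove_of_neg_mem (he : -e ∈ C) (hunit : IsOrderUnit C e) (p : V) :
    ¬BddAbove {r : ℝ | p - r • e ∈ C} := by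
  rintro ⟨M, hM⟩
  obtain ⟨r, hr⟩ := hunit (-p)
  have hr' : -r ≤ M := hM (show p - (-r) • e ∈ C by convert hr using 1; module)
  have hM1 : p - (M + 1) • e ∈ C := by
    convert C.add_mem hr (C.smul_mem (show 0 ≤ M + 1 + r by linarith) he) using 1; module
  linarith [hM hM1]

theorem sSup_eq_sInf_and_exists_min (hunit : IsOrderUnit C e) (p : V) :
    sSup ((fun r : ℝ => (r : EReal)) '' {r : ℝ | p - r • e ∈ C})
      = sInf ((fun E : V →ₗ[ℝ] ℝ => ((E p : ℝ) : EReal)) '' pseudoExpectations C e) ∧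
    ((pseudoExpectations C e).Nonempty →
      ∃ E ∈ pseudoExpectations C e, ∀ E' ∈ pseudoExpectations C e, E p ≤ E' p) := by
  by_cases he : -e ∈ C
  · rw [pseudoExpectations_eq_empty he, image_empty, sInf_empty,
      EReal.sSup_image_coe_of_not_bddAbove (not_bddAbove_of_neg_mem he hunit p)]
    exact ⟨rfl, fun h => absurd h not_nonempty_empty⟩
  · obtain ⟨E, hE, hlub⟩ := exists_mem_pseudoExpectations_isLUB he hunit p
    have hmin : ∀ E' ∈ pseudoExpectations C e, E p ≤ E' p := fun E' hE' =>
      hlub.2 fun r hr => le_apply_of_mem_pseudoExpectations hE' hr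
    refine ⟨?_, fun _ => ⟨E, hE, hmin⟩⟩
    rw [EReal.sSup_image_coe_of_isLUB hlub, (IsLeast.isGLB ⟨mem_image_of_mem _ hE, ?_⟩).sInf_eq]
    rintro _ ⟨E', hE', rfl⟩
    exact EReal.coe_le_coe_iff.2 (hmin E' hE')

end PointedCone

theorem le_iff_le_zero_sub {V : Type*} [AddCommGroup V] {le : V → V → Prop}
    (hrefl : ∀ v, le v v)
    (hadd : ∀ p₁ q₁ p₂ q₂, le p₁ q₁ → le p₂ q₂ → le (p₁ + p₂) (q₁ + q₂)) {a b : V} :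
    le a b ↔ le 0 (b - a) := by
  constructor
  · intro h
    simpa [← sub_eq_add_neg] using hadd _ _ _ _ h (hrefl (-a))
  · intro h
    simpa using hadd _ _ _ _ h (hrefl a)

def nonnegCone {V : Type*} [AddCommGroup V] [Module ℝ V] (le : V → V → Prop)
    (hrefl : ∀ v, le v v)
    (hadd : ∀ p₁ q₁ p₂ q₂, le p₁ q₁ → le p₂ q₂ → le (p₁ + p₂) (q₁ + q₂))
    (hsmul : ∀ a : ℝ, 0 ≤ a → ∀ p q, le p q → le (a • p) (a • q)) : PointedCone ℝ V where
  carrier := {v | le 0 v}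
  add_mem' ha hb := by simpa using hadd _ _ _ _ ha hb
  zero_mem' := hrefl 0
  smul_mem' c _ hv := by simpa using hsmul c c.2 _ _ hv

theorem statement12_general (V : Type*) [AddCommGroup V] [Module ℝ V]
    (le : V → V → Prop)
    (hrefl : ∀ v, le v v)
    (hadd : ∀ p₁ q₁ p₂ q₂, le p₁ q₁ → le p₂ q₂ → le (p₁ + p₂) (q₁ + q₂))
    (hsmul : ∀ a : ℝ, 0 ≤ a → ∀ p q, le p q → le (a • p) (a • q))
    (e : V) (hunit : ∀ p : V, ∃ r : ℝ, 0 ≤ r ∧ le p (r • e))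
    (p : V) :
    sSup ((fun r : ℝ => (r : EReal)) '' {r : ℝ | le (r • e) p})
      = sInf ((fun E : V →ₗ[ℝ] ℝ => ((E p : ℝ) : EReal)) ''
          {E : V →ₗ[ℝ] ℝ | (∀ v : V, le 0 v → 0 ≤ E v) ∧ E e = 1}) ∧
    ({E : V →ₗ[ℝ] ℝ | (∀ v : V, le 0 v → 0 ≤ E v) ∧ E e = 1}.Nonempty →
      ∃ E ∈ {E : V →ₗ[ℝ] ℝ | (∀ v : V, le 0 v → 0 ≤ E v) ∧ E e = 1},
        ∀ E' ∈ {E : V →ₗ[ℝ] ℝ | (∀ v : V, le 0 v → 0 ≤ E v) ∧ E e = 1},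
          E p ≤ E' p) := by
  let C := nonnegCone le hrefl hadd hsmul
  have hC : ∀ {a b : V}, le a b ↔ b - a ∈ C := le_iff_le_zero_sub hrefl hadd
  have hunitC : C.IsOrderUnit e := fun v =>
    let ⟨r, _, hr⟩ := hunit v
    ⟨r, hC.1 hr⟩
  have hS : {r : ℝ | le (r • e) p} = {r : ℝ | p - r • e ∈ C} := ext fun _ => hC
  rw [hS]
  exact C.sSup_eq_sInf_and_exists_min hunitC p

/-- **Theorem (zero-gap duality for pre-ordered vector spaces with order unit).**
For every `p ∈ V`, `sup{r ∈ ℝ : p ≥ r·e} = inf{E(p) : E ∈ ℰ(V)}` as elements of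
`ℝ ∪ {±∞}`, and if `ℰ(V)` is nonempty the infimum is attained. -/
theorem statement12 (V : Type*) [AddCommGroup V] [Module ℝ V]
    (le : V → V → Prop)
    (hrefl : ∀ v, le v v)
    (htrans : ∀ a b c, le a b → le b c → le a c)
    (hadd : ∀ p₁ q₁ p₂ q₂, le p₁ q₁ → le p₂ q₂ → le (p₁ + p₂) (q₁ + q₂))
    (hsmul : ∀ a : ℝ, 0 ≤ a → ∀ p q, le p q → le (a • p) (a • q))
    (e : V) (hunit : ∀ p : V, ∃ r : ℝ, 0 ≤ r ∧ le p (r • e))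
    (p : V) :
    sSup ((fun r : ℝ => (r : EReal)) '' {r : ℝ | le (r • e) p})
      = sInf ((fun E : V →ₗ[ℝ] ℝ => ((E p : ℝ) : EReal)) ''
          {E : V →ₗ[ℝ] ℝ | (∀ v : V, le 0 v → 0 ≤ E v) ∧ E e = 1}) ∧
    ({E : V →ₗ[ℝ] ℝ | (∀ v : V, le 0 v → 0 ≤ E v) ∧ E e = 1}.Nonempty →
      ∃ E ∈ {E : V →ₗ[ℝ] ℝ | (∀ v : V, le 0 v → 0 ≤ E v) ∧ E e = 1},
        ∀ E' ∈ {E : V →ₗ[ℝ] ℝ | (∀ v : V, le 0 v → 0 ≤ E v) ∧ E e = 1},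
          E p ≤ E' p) :=
  statement12_general V le hrefl hadd hsmul e hunit p
end

section
/- Let I be an ideal of ℝ[x], let Q be an indexed set of polynomials, let c be a cut-off function for Q, and let w be a positive integer. If there is R ∈ ℝ, R ≥ 0, such that Q ⊢^{c,I}_{w,2} R − x² ≥ 0 for every variable x, then for every monomial m of degree at most d and every a ∈ ℝ there exists b ∈ ℝ, b ≥ 0, such that Q ⊢^{c,I}_{w,2d} a·m² + b ≥ 0. -/
open MvPolynomial

noncomputable section

/-- The sum of squares of a list of polynomials. -/
def sosOfI {σ : Type} (l : List (MvPolynomial σ ℝ)) : MvPolynomial σ ℝ :=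
  (l.map (· ^ 2)).sum

/-- A Positivstellensatz proof mod the ideal `I` of `goal ≥ 0` from the inequality
constraints `q j ≥ 0` (`j : Fin ℓ`) and the equality constraints `p j = 0`
(`j : Fin m`). -/
structure PSProofMod (σ : Type) (ℓ m : ℕ) (q : Fin ℓ → MvPolynomial σ ℝ)
    (p : Fin m → MvPolynomial σ ℝ) (I : Ideal (MvPolynomial σ ℝ))
    (goal : MvPolynomial σ ℝ) : Type where
  Js : Finset (Finset (Fin ℓ))
  empty_not_mem : ∅ ∉ Js
  r0 : List (MvPolynomial σ ℝ)
  r : Finset (Fin ℓ) → List (MvPolynomial σ ℝ)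
  t : Fin m → MvPolynomial σ ℝ
  identity : goal - (sosOfI r0 + ∑ J ∈ Js, sosOfI (r J) * ∏ j ∈ J, q j
      + ∑ j, t j * p j) ∈ I

/-- A cut-off function for the system `q, p`. -/
def IsCutoffI {σ : Type} {ℓ m : ℕ} (q : Fin ℓ → MvPolynomial σ ℝ)
    (p : Fin m → MvPolynomial σ ℝ) (c : Finset (Fin ℓ) ⊕ Fin m → ℕ) : Prop :=
  (∀ J : Finset (Fin ℓ), ∑ j ∈ J, (q j).totalDegree ≤ c (Sum.inl J)) ∧
  (∀ j : Fin m, (p j).totalDegree ≤ c (Sum.inr j))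

/-- The proof has degree mod `c` at most `d` (the zero polynomial having
degree `−∞`). -/
def PSProofMod.degreeModLE {σ : Type} {ℓ m : ℕ} {q : Fin ℓ → MvPolynomial σ ℝ}
    {p : Fin m → MvPolynomial σ ℝ} {I : Ideal (MvPolynomial σ ℝ)}
    {goal : MvPolynomial σ ℝ} (π : PSProofMod σ ℓ m q p I goal)
    (c : Finset (Fin ℓ) ⊕ Fin m → ℕ) (d : ℕ) : Prop :=
  goal.totalDegree ≤ d ∧ (sosOfI π.r0).totalDegree ≤ d ∧
  (∀ J ∈ π.Js, sosOfI (π.r J) ≠ 0 → (sosOfI (π.r J)).totalDegree + c (Sum.inl J) ≤ d) ∧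
  (∀ j, π.t j ≠ 0 → (π.t j).totalDegree + c (Sum.inr j) ≤ d)

/-- The proof has product-width at most `w`. -/
def PSProofMod.widthLE {σ : Type} {ℓ m : ℕ} {q : Fin ℓ → MvPolynomial σ ℝ}
    {p : Fin m → MvPolynomial σ ℝ} {I : Ideal (MvPolynomial σ ℝ)}
    {goal : MvPolynomial σ ℝ} (π : PSProofMod σ ℓ m q p I goal) (w : ℕ) : Prop :=
  ∀ J ∈ π.Js, J.card ≤ w

/-- `PS^{c,I}_{w,d}(Q)`: the cone of polynomials of degree at most `d` with a PS
proof mod `I` of degree mod `c` at most `d` and product-width at most `w`.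
`Q ⊢^{c,I}_{w,d} a ≥ b` is expressed as `a - b ∈ PSconeI …`. -/
def PSconeI (σ : Type) (ℓ m : ℕ) (q : Fin ℓ → MvPolynomial σ ℝ)
    (p : Fin m → MvPolynomial σ ℝ) (I : Ideal (MvPolynomial σ ℝ))
    (c : Finset (Fin ℓ) ⊕ Fin m → ℕ) (w d : ℕ) : Set (MvPolynomial σ ℝ) :=
  {g | g.totalDegree ≤ d ∧
    ∃ π : PSProofMod σ ℓ m q p I g, π.degreeModLE c d ∧ π.widthLE w}

section Helpers

variable {σ : Type} {ℓ m : ℕ} {q : Fin ℓ → MvPolynomial σ ℝ}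
  {p : Fin m → MvPolynomial σ ℝ} {I : Ideal (MvPolynomial σ ℝ)}
  {c : Finset (Fin ℓ) ⊕ Fin m → ℕ} {w : ℕ}

lemma sosOfI_nil : sosOfI ([] : List (MvPolynomial σ ℝ)) = 0 := rfl

lemma sosOfI_cons (x : MvPolynomial σ ℝ) (l) :
    sosOfI (x :: l) = x ^ 2 + sosOfI l := by
  simp [sosOfI]

lemma sosOfI_append (l1 l2 : List (MvPolynomial σ ℝ)) :
    sosOfI (l1 ++ l2) = sosOfI l1 + sosOfI l2 := by
  simp [sosOfI]

lemma sosOfI_map_mul (f : MvPolynomial σ ℝ) (l : List (MvPolynomial σ ℝ)) :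
    sosOfI (l.map (f * ·)) = f ^ 2 * sosOfI l := by
  induction l with
  | nil => simp [sosOfI]
  | cons x xs ih => simp [sosOfI_cons, ih, mul_pow, mul_add]

lemma deg_add_aux {x y : MvPolynomial σ ℝ} {k d : ℕ}
    (hx : x ≠ 0 → x.totalDegree + k ≤ d) (hy : y ≠ 0 → y.totalDegree + k ≤ d)
    (hxy : x + y ≠ 0) : (x + y).totalDegree + k ≤ d := by
  rcases eq_or_ne x 0 with rfl | hx0
  · simpa using hy (by simpa using hxy)
  rcases eq_or_ne y 0 with rfl | hy0
  · simpa using hx (by simpa using hxy)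
  · have h := MvPolynomial.totalDegree_add x y
    have h1 := hx hx0
    have h2 := hy hy0
    omega

/-- membership of a sum of squares in the cone -/
lemma mem_cone_sos (l : List (MvPolynomial σ ℝ)) {d : ℕ}
    (h : (sosOfI l).totalDegree ≤ d) :
    sosOfI l ∈ PSconeI σ ℓ m q p I c w d := by
  refine ⟨h, ⟨∅, Finset.notMem_empty _, l, fun _ => [], fun _ => 0, by simp⟩,
    ⟨h, h, by simp, by simp⟩, by intro J hJ; simp at hJ⟩

lemma cone_mono {d d' : ℕ} (hdd : d ≤ d') :
    PSconeI σ ℓ m q p I c w d ⊆ PSconeI σ ℓ m q p I c w d' := by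
  rintro g ⟨hg, π, ⟨h1, h2, h3, h4⟩, h5⟩
  exact ⟨hg.trans hdd, π, ⟨h1.trans hdd, h2.trans hdd,
    fun J hJ hne => (h3 J hJ hne).trans hdd,
    fun j hne => (h4 j hne).trans hdd⟩, h5⟩

end Helpers

section Helpers2

variable {σ : Type} {ℓ m : ℕ} {q : Fin ℓ → MvPolynomial σ ℝ}
  {p : Fin m → MvPolynomial σ ℝ} {I : Ideal (MvPolynomial σ ℝ)}
  {c : Finset (Fin ℓ) ⊕ Fin m → ℕ} {w : ℕ}

lemma cone_add {d : ℕ} {g1 g2 : MvPolynomial σ ℝ}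
    (h1 : g1 ∈ PSconeI σ ℓ m q p I c w d) (h2 : g2 ∈ PSconeI σ ℓ m q p I c w d) :
    g1 + g2 ∈ PSconeI σ ℓ m q p I c w d := by
  obtain ⟨hg1, π1, ⟨hd1, hs1, hJ1, ht1⟩, hw1⟩ := h1
  obtain ⟨hg2, π2, ⟨hd2, hs2, hJ2, ht2⟩, hw2⟩ := h2
  refine ⟨?_, ⟨π1.Js ∪ π2.Js, ?_,
    π1.r0 ++ π2.r0,
    fun J => (if J ∈ π1.Js then π1.r J else []) ++ (if J ∈ π2.Js then π2.r J else []),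
    fun j => π1.t j + π2.t j, ?_⟩, ⟨?_, ?_, ?_, ?_⟩, ?_⟩
  · exact le_trans (MvPolynomial.totalDegree_add g1 g2) (by omega)
  · simp [Finset.mem_union, π1.empty_not_mem, π2.empty_not_mem]
  · -- identity
    have key : ∀ J ∈ π1.Js ∪ π2.Js,
        sosOfI ((if J ∈ π1.Js then π1.r J else []) ++ (if J ∈ π2.Js then π2.r J else []))
          * ∏ j ∈ J, q j
        = (if J ∈ π1.Js then sosOfI (π1.r J) * ∏ j ∈ J, q j else 0)
          + (if J ∈ π2.Js then sosOfI (π2.r J) * ∏ j ∈ J, q j else 0) := by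
      intro J _
      rw [sosOfI_append]
      split_ifs <;> simp [sosOfI_nil, add_mul]
    rw [Finset.sum_congr rfl key, Finset.sum_add_distrib,
      Finset.sum_ite_mem, Finset.sum_ite_mem,
      Finset.union_inter_cancel_left, Finset.union_inter_cancel_right,
      sosOfI_append]
    have := I.add_mem π1.identity π2.identity
    convert this using 1
    rw [Finset.sum_congr rfl (fun j _ => add_mul (π1.t j) (π2.t j) (p j)),
      Finset.sum_add_distrib]
    ring
  · exact le_trans (MvPolynomial.totalDegree_add g1 g2) (by omega)
  · rw [sosOfI_append]
    exact le_trans (MvPolynomial.totalDegree_add _ _) (by omega)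
  · intro J hJ hne
    rw [sosOfI_append] at hne ⊢
    refine deg_add_aux ?_ ?_ hne
    · intro hx
      split_ifs at hx ⊢ with h
      · exact hJ1 J h hx
      · simp [sosOfI_nil] at hx
    · intro hx
      split_ifs at hx ⊢ with h
      · exact hJ2 J h hx
      · simp [sosOfI_nil] at hx
  · intro j hne
    exact deg_add_aux (ht1 j) (ht2 j) hne
  · intro J hJ
    rcases Finset.mem_union.mp hJ with h | h
    · exact hw1 J h
    · exact hw2 J h

lemma cone_mul_sq {d e : ℕ} {g f : MvPolynomial σ ℝ} (hf : f.totalDegree ≤ e)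
    (hg : g ∈ PSconeI σ ℓ m q p I c w d) :
    f ^ 2 * g ∈ PSconeI σ ℓ m q p I c w (d + 2 * e) := by
  obtain ⟨hgd, π, ⟨hd1, hs1, hJ1, ht1⟩, hw1⟩ := hg
  have hf2 : (f ^ 2).totalDegree ≤ 2 * e := by
    have := MvPolynomial.totalDegree_pow f 2
    omega
  have hmul : ∀ s : MvPolynomial σ ℝ, (f ^ 2 * s).totalDegree ≤ 2 * e + s.totalDegree := by
    intro s
    have := MvPolynomial.totalDegree_mul (f ^ 2) s
    omega
  refine ⟨?_, ⟨π.Js, π.empty_not_mem,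
    π.r0.map (f * ·), fun J => (π.r J).map (f * ·), fun j => f ^ 2 * π.t j, ?_⟩,
    ⟨?_, ?_, ?_, ?_⟩, hw1⟩
  · have := hmul g; omega
  · -- identity
    simp only [sosOfI_map_mul]
    have := I.mul_mem_left (f ^ 2) π.identity
    convert this using 1
    rw [mul_sub, mul_add, mul_add, Finset.mul_sum, Finset.mul_sum]
    simp [mul_assoc]
  · have := hmul g; omega
  · rw [sosOfI_map_mul]
    have := hmul (sosOfI π.r0); omega
  · intro J hJ hne
    rw [sosOfI_map_mul] at hne ⊢
    have hne' : sosOfI (π.r J) ≠ 0 := by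
      intro h; rw [h, mul_zero] at hne; exact hne rfl
    have := hJ1 J hJ hne'
    have := hmul (sosOfI (π.r J))
    omega
  · intro j hne
    dsimp only at hne ⊢
    have hne' : π.t j ≠ 0 := by
      intro h; rw [h, mul_zero] at hne; exact hne rfl
    have := ht1 j hne'
    have := hmul (π.t j)
    omega

end Helpers2

section Main

variable {σ : Type} {ℓ m : ℕ} {q : Fin ℓ → MvPolynomial σ ℝ}
  {p : Fin m → MvPolynomial σ ℝ} {I : Ideal (MvPolynomial σ ℝ)}
  {c : Finset (Fin ℓ) ⊕ Fin m → ℕ} {w : ℕ}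

lemma cone_nonneg_sq {d : ℕ} {a : ℝ} (ha : 0 ≤ a) (α : σ →₀ ℕ)
    (hα : (α.sum fun _ e => e) ≤ d) :
    C a * (monomial α 1 : MvPolynomial σ ℝ) ^ 2 ∈ PSconeI σ ℓ m q p I c w (2 * d) := by
  have hrw : C a * (monomial α 1 : MvPolynomial σ ℝ) ^ 2
      = sosOfI [C (Real.sqrt a) * monomial α 1] := by
    simp [sosOfI, mul_pow, ← C_pow, Real.sq_sqrt ha]
  have hdeg : (C a * (monomial α 1 : MvPolynomial σ ℝ) ^ 2).totalDegree ≤ 2 * d := by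
    have h1 := MvPolynomial.totalDegree_mul (C a : MvPolynomial σ ℝ) ((monomial α 1) ^ 2)
    have h2 := MvPolynomial.totalDegree_pow (monomial α (1:ℝ)) 2
    have h3 : (monomial α (1:ℝ)).totalDegree = α.sum fun _ e => e :=
      MvPolynomial.totalDegree_monomial α one_ne_zero
    have h4 : (C a : MvPolynomial σ ℝ).totalDegree = 0 := MvPolynomial.totalDegree_C a
    omega
  rw [hrw] at hdeg ⊢
  exact mem_cone_sos _ hdeg

lemma cone_const_case {d : ℕ} (a : ℝ) :
    ∃ b : ℝ, 0 ≤ b ∧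
      (C a * (monomial (0 : σ →₀ ℕ) 1 : MvPolynomial σ ℝ) ^ 2 + C b)
        ∈ PSconeI σ ℓ m q p I c w (2 * d) := by
  refine ⟨max (-a) 0, le_max_right _ _, ?_⟩
  have hab : (0:ℝ) ≤ a + max (-a) 0 := by
    rcases le_total 0 a with h | h
    · positivity
    · have : -a ≤ max (-a) 0 := le_max_left _ _
      linarith
  have hrw : C a * (monomial (0 : σ →₀ ℕ) 1 : MvPolynomial σ ℝ) ^ 2 + C (max (-a) 0)
      = C (a + max (-a) 0) * (monomial (0 : σ →₀ ℕ) 1 : MvPolynomial σ ℝ) ^ 2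
        + C (0:ℝ) := by
    rw [monomial_zero', C_1]
    simp [map_add]
  rw [hrw, map_zero, add_zero]
  exact cone_nonneg_sq hab 0 (by simp)

end Main

/-- **Lemma (bounded squares of monomials).** If `Q ⊢^{c,I}_{w,2} R − x² ≥ 0` for
every variable `x` and some `R ≥ 0`, then for every monomial `m₀ = monomial α 1`
of degree at most `d` and every `a ∈ ℝ` there is `b ≥ 0` with
`Q ⊢^{c,I}_{w,2d} a·m₀² + b ≥ 0`. -/
theorem statement13 (σ : Type) (ℓ m : ℕ) (q : Fin ℓ → MvPolynomial σ ℝ)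
    (p : Fin m → MvPolynomial σ ℝ) (I : Ideal (MvPolynomial σ ℝ))
    (c : Finset (Fin ℓ) ⊕ Fin m → ℕ) (hc : IsCutoffI q p c) (w : ℕ) (hw : 0 < w)
    (R : ℝ) (hR : 0 ≤ R)
    (hball : ∀ v : σ, (C R - X v ^ 2 : MvPolynomial σ ℝ) ∈ PSconeI σ ℓ m q p I c w 2)
    (d : ℕ) (α : σ →₀ ℕ) (hα : (α.sum fun _ e => e) ≤ d) (a : ℝ) :
    ∃ b : ℝ, 0 ≤ b ∧
      (C a * (monomial α 1 : MvPolynomial σ ℝ) ^ 2 + C b)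
        ∈ PSconeI σ ℓ m q p I c w (2 * d) := by
  induction d generalizing α a with
  | zero =>
    have h0 : (α.sum fun _ e => e) = 0 := Nat.le_zero.mp hα
    rw [Finsupp.sum, Finset.sum_eq_zero_iff] at h0
    have hα0 : α = 0 := by
      ext v
      by_cases hv : v ∈ α.support
      · exact h0 v hv
      · simpa using Finsupp.notMem_support_iff.mp hv
    subst hα0
    exact cone_const_case a
  | succ e ih =>
    by_cases hα0 : α = 0
    · subst hα0; exact cone_const_case a
    by_cases ha : 0 ≤ a
    · refine ⟨0, le_refl 0, ?_⟩
      rw [map_zero, add_zero]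
      exact cone_nonneg_sq ha α hα
    push_neg at ha
    -- pick a variable in the support
    obtain ⟨v, hv⟩ := Finsupp.support_nonempty_iff.mpr hα0
    have hv1 : 1 ≤ α v := Nat.one_le_iff_ne_zero.mpr (Finsupp.mem_support_iff.mp hv)
    set α' : σ →₀ ℕ := α - Finsupp.single v 1 with hα'def
    have hsum : α' + Finsupp.single v 1 = α := by
      ext u
      rcases eq_or_ne u v with rfl | hne
      · simp [hα'def, Finsupp.single_apply]
        omega
      · simp [hα'def, Finsupp.single_apply, hne, Ne.symm hne]
    have hα'le : (α'.sum fun _ e => e) ≤ e := by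
      have : ((α' + Finsupp.single v 1).sum fun _ e => e)
          = (α'.sum fun _ e => e) + ((Finsupp.single v 1).sum fun _ e => e) :=
        Finsupp.sum_add_index' (fun _ => rfl) (fun _ _ _ => rfl)
      rw [hsum] at this
      have hs1 : ((Finsupp.single v 1).sum fun (_ : σ) (e : ℕ) => e) = 1 := by
        simp [Finsupp.sum_single_index]
      omega
    have hmono : (monomial α 1 : MvPolynomial σ ℝ)
        = monomial α' 1 * X v := by
      rw [X, monomial_mul, mul_one, hsum]
    -- first summand : (-a) * m'^2 * (C R - X v ^ 2)
    have hna : (0:ℝ) ≤ -a := by linarith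
    set f : MvPolynomial σ ℝ := C (Real.sqrt (-a)) * monomial α' 1 with hfdef
    have hfdeg : f.totalDegree ≤ e := by
      rw [hfdef]
      have h1 := MvPolynomial.totalDegree_mul (C (Real.sqrt (-a)) : MvPolynomial σ ℝ)
        (monomial α' (1:ℝ))
      have h3 : (monomial α' (1:ℝ)).totalDegree = α'.sum fun _ e => e :=
        MvPolynomial.totalDegree_monomial α' one_ne_zero
      have h4 : (C (Real.sqrt (-a)) : MvPolynomial σ ℝ).totalDegree = 0 :=
        MvPolynomial.totalDegree_C _
      omega
    have hfsq : f ^ 2 = C (-a) * (monomial α' 1 : MvPolynomial σ ℝ) ^ 2 := by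
      rw [hfdef, mul_pow, ← C_pow, Real.sq_sqrt hna]
    have h2 : f ^ 2 * (C R - X v ^ 2) ∈ PSconeI σ ℓ m q p I c w (2 + 2 * e) :=
      cone_mul_sq hfdeg (hball v)
    have h2' : f ^ 2 * (C R - X v ^ 2) ∈ PSconeI σ ℓ m q p I c w (2 * (e + 1)) := by
      have : 2 + 2 * e = 2 * (e + 1) := by ring
      rwa [this] at h2
    obtain ⟨b, hb0, hb⟩ := ih α' hα'le (a * R)
    have hb' : C (a * R) * (monomial α' 1 : MvPolynomial σ ℝ) ^ 2 + C b
        ∈ PSconeI σ ℓ m q p I c w (2 * (e + 1)) :=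
      cone_mono (by omega) hb
    refine ⟨b, hb0, ?_⟩
    have key : C a * (monomial α 1 : MvPolynomial σ ℝ) ^ 2 + C b
        = f ^ 2 * (C R - X v ^ 2)
          + (C (a * R) * (monomial α' 1 : MvPolynomial σ ℝ) ^ 2 + C b) := by
      rw [hfsq, hmono, map_neg, map_mul]
      ring
    rw [key]
    exact cone_add h2' hb'
end
end
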